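/- arXiv:1811.01917 — 10 statements merged into one kernel-verified Lean document; each statement's English description precedes it below -/
import Mathlib

section
/- For every fixed τ > 0, the map (x,y) ↦ F(x+iy, τ) has continuously differentiable real and imaginary parts, and for all z = x + iy ∈ ℂ the message variance satisfies G(z, τ) = (τ/2)·( ∂Re F/∂x (x+iy, τ) + ∂Im F/∂y (x+iy, τ) ). (Lemma 2 of the paper: the message variance of LAMA equals τ/2 times the sum of the two diagonal partial derivatives of the message mean.) -/
open MeasureTheory Filter Topology

noncomputable def wC (O : Finset ℂ) (p : ℂ → ℝ) (z : ℂ) (τ : ℝ) (a : ℂ) : ℝ :=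
  p a * Real.exp (-(‖z - a‖) ^ 2 / τ) /
    ∑ a' ∈ O, p a' * Real.exp (-(‖z - a'‖) ^ 2 / τ)

noncomputable def Fc (O : Finset ℂ) (p : ℂ → ℝ) (z : ℂ) (τ : ℝ) : ℂ :=
  ∑ a ∈ O, (wC O p z τ a : ℂ) * a

noncomputable def Gc (O : Finset ℂ) (p : ℂ → ℝ) (z : ℂ) (τ : ℝ) : ℝ :=
  ∑ a ∈ O, wC O p z τ a * (‖a - Fc O p z τ‖) ^ 2


-- helper defs
noncomputable def gg (p : ℂ → ℝ) (τ : ℝ) (a : ℂ) (x y : ℝ) : ℝ :=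
  p a * Real.exp (-((x - a.re)^2 + (y - a.im)^2)/τ)

noncomputable def Dd (O : Finset ℂ) (p : ℂ → ℝ) (τ : ℝ) (x y : ℝ) : ℝ :=
  ∑ a ∈ O, gg p τ a x y

lemma abs_sq_eq (a : ℂ) (x y : ℝ) :
    (‖(x:ℂ) + y*Complex.I - a‖)^2 = (x - a.re)^2 + (y - a.im)^2 := by
  rw [Complex.sq_norm, Complex.normSq_apply]
  simp [Complex.add_re, Complex.add_im, Complex.sub_re, Complex.sub_im]
  ring

lemma wC_eq (O : Finset ℂ) (p : ℂ → ℝ) (τ : ℝ) (a : ℂ) (x y : ℝ) :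
    wC O p ((x:ℂ) + y*Complex.I) τ a = gg p τ a x y / Dd O p τ x y := by
  unfold wC gg Dd
  congr 1
  · rw [abs_sq_eq]
  · exact Finset.sum_congr rfl (fun b _ => by rw [abs_sq_eq]; rfl)

lemma Dd_pos (O : Finset ℂ) (hO : O.Nonempty) (p : ℂ → ℝ) (hp : ∀ a ∈ O, 0 < p a)
    (τ : ℝ) (x y : ℝ) : 0 < Dd O p τ x y := by
  refine Finset.sum_pos (fun a ha => ?_) hO
  exact mul_pos (hp a ha) (Real.exp_pos _)

lemma Fre_eq (O : Finset ℂ) (p : ℂ → ℝ) (τ : ℝ) (x y : ℝ) :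
    (Fc O p ((x:ℂ) + y*Complex.I) τ).re
      = (∑ a ∈ O, gg p τ a x y * a.re) / Dd O p τ x y := by
  unfold Fc
  rw [Complex.re_sum, Finset.sum_div]
  refine Finset.sum_congr rfl (fun a _ => ?_)
  simp only [Complex.mul_re, Complex.ofReal_re, Complex.ofReal_im, zero_mul, sub_zero]; rw [wC_eq, div_mul_eq_mul_div]

lemma Fim_eq (O : Finset ℂ) (p : ℂ → ℝ) (τ : ℝ) (x y : ℝ) :
    (Fc O p ((x:ℂ) + y*Complex.I) τ).im
      = (∑ a ∈ O, gg p τ a x y * a.im) / Dd O p τ x y := by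
  unfold Fc
  rw [Complex.im_sum, Finset.sum_div]
  refine Finset.sum_congr rfl (fun a _ => ?_)
  simp only [Complex.mul_im, Complex.ofReal_re, Complex.ofReal_im, zero_mul, add_zero]; rw [wC_eq, div_mul_eq_mul_div]

lemma hasDerivAt_gg_x (p : ℂ → ℝ) (τ : ℝ) (a : ℂ) (x y : ℝ) :
    HasDerivAt (fun x' => gg p τ a x' y) (gg p τ a x y * (-(2*(x - a.re))/τ)) x := by
  have h1 : HasDerivAt (fun x' : ℝ => x' - a.re) 1 x := (hasDerivAt_id x).sub_const _
  have h2 : HasDerivAt (fun x' : ℝ => (x' - a.re)^2) (2*(x-a.re)) x := by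
    simpa using h1.fun_pow 2
  have h3 : HasDerivAt (fun x' : ℝ => -((x'-a.re)^2 + (y-a.im)^2)/τ) (-(2*(x-a.re))/τ) x := by
    simpa [neg_div] using ((h2.add_const ((y-a.im)^2)).neg).div_const τ
  have h4 := h3.exp
  have h5 := h4.const_mul (p a)
  unfold gg
  convert h5 using 1
  · rfl
  · rfl
  ring

lemma hasDerivAt_gg_y (p : ℂ → ℝ) (τ : ℝ) (a : ℂ) (x y : ℝ) :
    HasDerivAt (fun y' => gg p τ a x y') (gg p τ a x y * (-(2*(y - a.im))/τ)) y := by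
  have h1 : HasDerivAt (fun y' : ℝ => y' - a.im) 1 y := (hasDerivAt_id y).sub_const _
  have h2 : HasDerivAt (fun y' : ℝ => (y' - a.im)^2) (2*(y-a.im)) y := by
    simpa using h1.fun_pow 2
  have h3 : HasDerivAt (fun y' : ℝ => -((x-a.re)^2 + (y'-a.im)^2)/τ) (-(2*(y-a.im))/τ) y := by
    simpa [neg_div] using ((h2.const_add ((x-a.re)^2)).neg).div_const τ
  have h4 := (h3.exp).const_mul (p a)
  unfold gg
  convert h4 using 1
  · rfl
  · rfl
  ring

lemma hasDerivAt_Fre (O : Finset ℂ) (hO : O.Nonempty) (p : ℂ → ℝ) (hp : ∀ a ∈ O, 0 < p a)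
    (τ : ℝ) (hτ : 0 < τ) (x y : ℝ) :
    HasDerivAt (fun x' : ℝ => (Fc O p ((x':ℂ) + y*Complex.I) τ).re)
      (2/τ * ((∑ a ∈ O, wC O p ((x:ℂ) + y*Complex.I) τ a * a.re^2)
        - ((Fc O p ((x:ℂ) + y*Complex.I) τ).re)^2)) x := by
  have hDne : Dd O p τ x y ≠ 0 := (Dd_pos O hO p hp τ x y).ne'
  have hτne : τ ≠ 0 := hτ.ne'
  have hN : HasDerivAt (fun x' => ∑ a ∈ O, gg p τ a x' y * a.re)
      (∑ a ∈ O, gg p τ a x y * (-(2*(x - a.re))/τ) * a.re) x :=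
    HasDerivAt.fun_sum (fun a _ => (hasDerivAt_gg_x p τ a x y).mul_const a.re)
  have hD : HasDerivAt (fun x' => Dd O p τ x' y)
      (∑ a ∈ O, gg p τ a x y * (-(2*(x - a.re))/τ)) x :=
    HasDerivAt.fun_sum (fun a _ => hasDerivAt_gg_x p τ a x y)
  have hdiv := hN.div hD hDne
  have heq : (fun x' : ℝ => (Fc O p ((x':ℂ) + y*Complex.I) τ).re)
      = fun x' => (∑ a ∈ O, gg p τ a x' y * a.re) / Dd O p τ x' y := by
    funext x'; exact Fre_eq O p τ x' y
  rw [heq, Fre_eq]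
  convert hdiv using 1
  · rfl
  · rfl
  · rfl
  -- value equality
  set D := Dd O p τ x y with hDdef
  set S1 := ∑ a ∈ O, gg p τ a x y * a.re with hS1
  set S2 := ∑ a ∈ O, gg p τ a x y * a.re^2 with hS2
  have hW : (∑ a ∈ O, wC O p ((x:ℂ) + y*Complex.I) τ a * a.re^2) = S2 / D := by
    rw [hS2, Finset.sum_div]
    exact Finset.sum_congr rfl (fun a _ => by rw [wC_eq, div_mul_eq_mul_div])
  have hN' : (∑ a ∈ O, gg p τ a x y * (-(2*(x - a.re))/τ) * a.re)
      = 2/τ * S2 - 2/τ * x * S1 := by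
    rw [hS2, hS1, Finset.mul_sum, Finset.mul_sum, ← Finset.sum_sub_distrib]
    exact Finset.sum_congr rfl (fun a _ => by ring)
  have hD' : (∑ a ∈ O, gg p τ a x y * (-(2*(x - a.re))/τ))
      = 2/τ * S1 - 2/τ * x * D := by
    rw [hS1, hDdef, Dd, Finset.mul_sum, Finset.mul_sum, ← Finset.sum_sub_distrib]
    exact Finset.sum_congr rfl (fun a _ => by ring)
  rw [hW, hN', hD']
  field_simp
  ring

lemma hasDerivAt_Fim (O : Finset ℂ) (hO : O.Nonempty) (p : ℂ → ℝ) (hp : ∀ a ∈ O, 0 < p a)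
    (τ : ℝ) (hτ : 0 < τ) (x y : ℝ) :
    HasDerivAt (fun y' : ℝ => (Fc O p ((x:ℂ) + (y':ℝ)*Complex.I) τ).im)
      (2/τ * ((∑ a ∈ O, wC O p ((x:ℂ) + y*Complex.I) τ a * a.im^2)
        - ((Fc O p ((x:ℂ) + y*Complex.I) τ).im)^2)) y := by
  have hDne : Dd O p τ x y ≠ 0 := (Dd_pos O hO p hp τ x y).ne'
  have hτne : τ ≠ 0 := hτ.ne'
  have hN : HasDerivAt (fun y' => ∑ a ∈ O, gg p τ a x y' * a.im)
      (∑ a ∈ O, gg p τ a x y * (-(2*(y - a.im))/τ) * a.im) y :=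
    HasDerivAt.fun_sum (fun a _ => (hasDerivAt_gg_y p τ a x y).mul_const a.im)
  have hD : HasDerivAt (fun y' => Dd O p τ x y')
      (∑ a ∈ O, gg p τ a x y * (-(2*(y - a.im))/τ)) y :=
    HasDerivAt.fun_sum (fun a _ => hasDerivAt_gg_y p τ a x y)
  have hdiv := hN.div hD hDne
  have heq : (fun y' : ℝ => (Fc O p ((x:ℂ) + (y':ℝ)*Complex.I) τ).im)
      = fun y' => (∑ a ∈ O, gg p τ a x y' * a.im) / Dd O p τ x y' := by
    funext y'; exact Fim_eq O p τ x y'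
  rw [heq, Fim_eq]
  convert hdiv using 1
  · rfl
  · rfl
  · rfl
  set D := Dd O p τ x y with hDdef
  set S1 := ∑ a ∈ O, gg p τ a x y * a.im with hS1
  set S2 := ∑ a ∈ O, gg p τ a x y * a.im^2 with hS2
  have hW : (∑ a ∈ O, wC O p ((x:ℂ) + y*Complex.I) τ a * a.im^2) = S2 / D := by
    rw [hS2, Finset.sum_div]
    exact Finset.sum_congr rfl (fun a _ => by rw [wC_eq, div_mul_eq_mul_div])
  have hN' : (∑ a ∈ O, gg p τ a x y * (-(2*(y - a.im))/τ) * a.im)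
      = 2/τ * S2 - 2/τ * y * S1 := by
    rw [hS2, hS1, Finset.mul_sum, Finset.mul_sum, ← Finset.sum_sub_distrib]
    exact Finset.sum_congr rfl (fun a _ => by ring)
  have hD' : (∑ a ∈ O, gg p τ a x y * (-(2*(y - a.im))/τ))
      = 2/τ * S1 - 2/τ * y * D := by
    rw [hS1, hDdef, Dd, Finset.mul_sum, Finset.mul_sum, ← Finset.sum_sub_distrib]
    exact Finset.sum_congr rfl (fun a _ => by ring)
  rw [hW, hN', hD']
  field_simp
  ring

lemma contDiff_gg (p : ℂ → ℝ) (τ : ℝ) (a : ℂ) :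
    ContDiff ℝ 1 (fun q : ℝ × ℝ => gg p τ a q.1 q.2) := by
  unfold gg
  apply ContDiff.mul contDiff_const
  apply Real.contDiff_exp.comp
  apply ContDiff.div_const
  apply ContDiff.neg
  exact ((contDiff_fst.sub contDiff_const).pow 2).add ((contDiff_snd.sub contDiff_const).pow 2)

lemma contDiff_parts (O : Finset ℂ) (hO : O.Nonempty) (p : ℂ → ℝ)
    (hp : ∀ a ∈ O, 0 < p a) (τ : ℝ) :
    ContDiff ℝ 1 (fun q : ℝ × ℝ => (Fc O p (↑q.1 + ↑q.2 * Complex.I) τ).re) ∧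
    ContDiff ℝ 1 (fun q : ℝ × ℝ => (Fc O p (↑q.1 + ↑q.2 * Complex.I) τ).im) := by
  have hDC : ContDiff ℝ 1 (fun q : ℝ × ℝ => Dd O p τ q.1 q.2) := by
    unfold Dd
    exact ContDiff.sum (fun a _ => contDiff_gg p τ a)
  have hDne : ∀ q : ℝ × ℝ, Dd O p τ q.1 q.2 ≠ 0 :=
    fun q => (Dd_pos O hO p hp τ q.1 q.2).ne'
  constructor
  · have : (fun q : ℝ × ℝ => (Fc O p (↑q.1 + ↑q.2 * Complex.I) τ).re)
        = fun q => (∑ a ∈ O, gg p τ a q.1 q.2 * a.re) / Dd O p τ q.1 q.2 := by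
      funext q; exact Fre_eq O p τ q.1 q.2
    rw [this]
    exact (ContDiff.sum (fun a _ => (contDiff_gg p τ a).mul contDiff_const)).div hDC hDne
  · have : (fun q : ℝ × ℝ => (Fc O p (↑q.1 + ↑q.2 * Complex.I) τ).im)
        = fun q => (∑ a ∈ O, gg p τ a q.1 q.2 * a.im) / Dd O p τ q.1 q.2 := by
      funext q; exact Fim_eq O p τ q.1 q.2
    rw [this]
    exact (ContDiff.sum (fun a _ => (contDiff_gg p τ a).mul contDiff_const)).div hDC hDne

/-- Lemma 2 of the paper: for fixed `τ > 0` the map `(x, y) ↦ F(x + iy, τ)` has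
continuously differentiable real and imaginary parts, and the message variance satisfies
`G(z, τ) = (τ/2) · (∂Re F/∂x + ∂Im F/∂y)`. -/
theorem lama_message_variance_identity
    (O : Finset ℂ) (hO : O.Nonempty) (p : ℂ → ℝ)
    (hp : ∀ a ∈ O, 0 < p a) (hpsum : ∑ a ∈ O, p a = 1)
    (τ : ℝ) (hτ : 0 < τ) :
    ContDiff ℝ 1 (fun q : ℝ × ℝ => (Fc O p (↑q.1 + ↑q.2 * Complex.I) τ).re) ∧
    ContDiff ℝ 1 (fun q : ℝ × ℝ => (Fc O p (↑q.1 + ↑q.2 * Complex.I) τ).im) ∧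
    ∀ x y : ℝ,
      Gc O p (↑x + ↑y * Complex.I) τ =
        τ / 2 *
          (deriv (fun x' : ℝ => (Fc O p (↑x' + ↑y * Complex.I) τ).re) x +
           deriv (fun y' : ℝ => (Fc O p (↑x + ↑y' * Complex.I) τ).im) y) := by
  obtain ⟨hre, him⟩ := contDiff_parts O hO p hp τ
  refine ⟨hre, him, fun x y => ?_⟩
  have hDne : Dd O p τ x y ≠ 0 := (Dd_pos O hO p hp τ x y).ne'
  have hτne : τ ≠ 0 := hτ.ne'
  rw [(hasDerivAt_Fre O hO p hp τ hτ x y).deriv, (hasDerivAt_Fim O hO p hp τ hτ x y).deriv]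
  set z : ℂ := (x:ℂ) + y*Complex.I with hz
  set w : ℂ → ℝ := wC O p z τ with hw
  set Fre := (Fc O p z τ).re with hFre
  set Fim := (Fc O p z τ).im with hFim
  -- weight sum = 1
  have hw1 : ∑ a ∈ O, w a = 1 := by
    rw [hw]
    have : ∀ a ∈ O, wC O p z τ a = gg p τ a x y / Dd O p τ x y :=
      fun a _ => wC_eq O p τ a x y
    rw [Finset.sum_congr rfl this, ← Finset.sum_div]
    exact div_self hDne
  have hwre : ∑ a ∈ O, w a * a.re = Fre := by
    rw [hFre, Fre_eq, Finset.sum_div]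
    exact Finset.sum_congr rfl (fun a _ => by rw [hw, wC_eq, div_mul_eq_mul_div])
  have hwim : ∑ a ∈ O, w a * a.im = Fim := by
    rw [hFim, Fim_eq, Finset.sum_div]
    exact Finset.sum_congr rfl (fun a _ => by rw [hw, wC_eq, div_mul_eq_mul_div])
  -- expand Gc
  have hG : Gc O p z τ = (∑ a ∈ O, w a * a.re^2) - Fre^2 + ((∑ a ∈ O, w a * a.im^2) - Fim^2) := by
    unfold Gc
    have hterm : ∀ a ∈ O, wC O p z τ a * (‖a - Fc O p z τ‖)^2
        = (w a * a.re^2 + w a * a.im^2) - 2*Fre*(w a * a.re) - 2*Fim*(w a * a.im)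
          + (Fre^2 + Fim^2) * w a := by
      intro a _
      rw [Complex.sq_norm, Complex.normSq_apply, Complex.sub_re, Complex.sub_im, ← hFre, ← hFim,
        ← hw]
      ring
    rw [Finset.sum_congr rfl hterm]
    simp only [Finset.sum_add_distrib, Finset.sum_sub_distrib, ← Finset.mul_sum]
    rw [hw1, hwre, hwim]
    ring
  rw [hG]
  field_simp
end

section
/- For every τ > 0 and z = x + iy ∈ ℂ, the partial derivative of the real part of the message mean with respect to x equals ∂Re F/∂x (x+iy, τ) = (2/τ)·( Σ_{a∈O} (Re a)²·w_a(z,τ) − ( Σ_{a∈O} (Re a)·w_a(z,τ) )² ), i.e., (2/τ) times the variance of Re a under the posterior weights; the analogous formula ∂Im F/∂y (x+iy, τ) = (2/τ)·( Σ_{a∈O} (Im a)²·w_a(z,τ) − ( Σ_{a∈O} (Im a)·w_a(z,τ) )² ) also holds. -/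
open MeasureTheory Filter Topology

noncomputable def qa (p : ℂ → ℝ) (τ : ℝ) (r k : ℂ → ℝ) (a : ℂ) (u : ℝ) : ℝ :=
  p a * Real.exp (-((u - r a) ^ 2 + k a) / τ)

noncomputable def SS (O : Finset ℂ) (p : ℂ → ℝ) (τ : ℝ) (r k : ℂ → ℝ) (u : ℝ) : ℝ :=
  ∑ a ∈ O, qa p τ r k a u

lemma aux_deriv (O : Finset ℂ) (hO : O.Nonempty) (p : ℂ → ℝ)
    (hp : ∀ a ∈ O, 0 < p a) (τ : ℝ) (hτ : 0 < τ) (r k : ℂ → ℝ) (u : ℝ) :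
    deriv (fun u' : ℝ => ∑ a ∈ O, qa p τ r k a u' / SS O p τ r k u' * r a) u =
      2 / τ * (∑ a ∈ O, (r a) ^ 2 * (qa p τ r k a u / SS O p τ r k u) -
        (∑ a ∈ O, r a * (qa p τ r k a u / SS O p τ r k u)) ^ 2) := by
  have hqpos : ∀ a ∈ O, ∀ u', 0 < qa p τ r k a u' := fun a ha u' =>
    mul_pos (hp a ha) (Real.exp_pos _)
  have hSpos : ∀ u', 0 < SS O p τ r k u' := fun u' =>
    Finset.sum_pos (fun a ha => hqpos a ha u') hO
  have hqd : ∀ a : ℂ, HasDerivAt (fun u' => qa p τ r k a u')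
      (qa p τ r k a u * (2 * (r a - u) / τ)) u := by
    intro a
    have h2 : HasDerivAt (fun u' : ℝ => (u' - r a) ^ 2) (2 * (u - r a)) u := by
      simpa using ((hasDerivAt_id u).sub_const (r a)).fun_pow 2
    have h1 : HasDerivAt (fun u' : ℝ => -((u' - r a) ^ 2 + k a) / τ) (2 * (r a - u) / τ) u := by
      have := ((h2.add_const (k a)).fun_neg).div_const τ
      exact this.congr_deriv (by ring)
    have := (h1.exp).const_mul (p a)
    exact this.congr_deriv (by unfold qa; ring)
  set s0 := SS O p τ r k u with hs0_def
  have hSd : HasDerivAt (fun u' => SS O p τ r k u')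
      (∑ a ∈ O, qa p τ r k a u * (2 * (r a - u) / τ)) u := by
    unfold SS
    exact HasDerivAt.fun_sum fun a _ => hqd a
  set S' := ∑ a ∈ O, qa p τ r k a u * (2 * (r a - u) / τ) with hS'_def
  have hF : HasDerivAt (fun u' : ℝ => ∑ a ∈ O, qa p τ r k a u' / SS O p τ r k u' * r a)
      (∑ a ∈ O, ((qa p τ r k a u * (2 * (r a - u) / τ)) * s0 - qa p τ r k a u * S') / s0 ^ 2 * r a)
      u := by
    refine HasDerivAt.fun_sum fun a _ => ?_
    exact ((hqd a).div hSd (hSpos u).ne').mul_const (r a)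
  rw [hF.deriv]
  set s1 := ∑ a ∈ O, qa p τ r k a u * r a with hs1_def
  set s2 := ∑ a ∈ O, qa p τ r k a u * r a ^ 2 with hs2_def
  have hs0 : s0 ≠ 0 := (hSpos u).ne'
  have hτ' : τ ≠ 0 := hτ.ne'
  have hS' : S' = (2 / τ) * s1 - (2 * u / τ) * s0 := by
    rw [hS'_def, hs1_def, hs0_def, SS, Finset.mul_sum, Finset.mul_sum,
      ← Finset.sum_sub_distrib]
    exact Finset.sum_congr rfl fun a _ => by field_simp
  have hL : ∑ a ∈ O, ((qa p τ r k a u * (2 * (r a - u) / τ)) * s0 - qa p τ r k a u * S')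
        / s0 ^ 2 * r a
      = ((2 * s0 / τ) * s2 + (-(2 * u * s0 / τ) - S') * s1) / s0 ^ 2 := by
    rw [hs2_def, hs1_def, Finset.mul_sum, Finset.mul_sum, ← Finset.sum_add_distrib,
      Finset.sum_div]
    refine Finset.sum_congr rfl fun a _ => ?_
    field_simp
    ring
  have hR1 : ∑ a ∈ O, (r a) ^ 2 * (qa p τ r k a u / s0) = s2 / s0 := by
    rw [hs2_def, Finset.sum_div]
    exact Finset.sum_congr rfl fun a _ => by ring
  have hR2 : ∑ a ∈ O, r a * (qa p τ r k a u / s0) = s1 / s0 := by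
    rw [hs1_def, Finset.sum_div]
    exact Finset.sum_congr rfl fun a _ => by ring
  rw [hL, hR1, hR2, hS']
  field_simp
  ring

/-- The diagonal partial derivatives of the message mean equal `(2/τ)` times the posterior
variances of the real resp. imaginary part of the constellation point. -/
theorem lama_diagonal_partials
    (O : Finset ℂ) (hO : O.Nonempty) (p : ℂ → ℝ)
    (hp : ∀ a ∈ O, 0 < p a) (hpsum : ∑ a ∈ O, p a = 1)
    (τ : ℝ) (hτ : 0 < τ) (x y : ℝ) :
    deriv (fun x' : ℝ => (Fc O p (↑x' + ↑y * Complex.I) τ).re) x =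
      2 / τ * (∑ a ∈ O, a.re ^ 2 * wC O p (↑x + ↑y * Complex.I) τ a -
        (∑ a ∈ O, a.re * wC O p (↑x + ↑y * Complex.I) τ a) ^ 2) ∧
    deriv (fun y' : ℝ => (Fc O p (↑x + ↑y' * Complex.I) τ).im) y =
      2 / τ * (∑ a ∈ O, a.im ^ 2 * wC O p (↑x + ↑y * Complex.I) τ a -
        (∑ a ∈ O, a.im * wC O p (↑x + ↑y * Complex.I) τ a) ^ 2) := by
  have habs1 : ∀ (w : ℝ) (a : ℂ), (‖↑w + ↑y * Complex.I - a‖) ^ 2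
      = (w - a.re) ^ 2 + (y - a.im) ^ 2 := by
    intro w a
    rw [Complex.sq_norm, Complex.normSq_apply]
    simp
    ring
  have habs2 : ∀ (w : ℝ) (a : ℂ), (‖↑x + ↑w * Complex.I - a‖) ^ 2
      = (w - a.im) ^ 2 + (x - a.re) ^ 2 := by
    intro w a
    rw [Complex.sq_norm, Complex.normSq_apply]
    simp
    ring
  have hw1 : ∀ (w : ℝ) (a : ℂ), wC O p (↑w + ↑y * Complex.I) τ a
      = qa p τ Complex.re (fun a => (y - a.im) ^ 2) a w /
        SS O p τ Complex.re (fun a => (y - a.im) ^ 2) w := by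
    intro w a
    simp only [wC, qa, SS, habs1]
  have hw2 : ∀ (w : ℝ) (a : ℂ), wC O p (↑x + ↑w * Complex.I) τ a
      = qa p τ Complex.im (fun a => (x - a.re) ^ 2) a w /
        SS O p τ Complex.im (fun a => (x - a.re) ^ 2) w := by
    intro w a
    simp only [wC, qa, SS, habs2]
  constructor
  · have hfun : (fun x' : ℝ => (Fc O p (↑x' + ↑y * Complex.I) τ).re)
        = fun x' => ∑ a ∈ O, qa p τ Complex.re (fun a => (y - a.im) ^ 2) a x' /
            SS O p τ Complex.re (fun a => (y - a.im) ^ 2) x' * a.re := by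
      funext x'
      rw [Fc, Complex.re_sum]
      exact Finset.sum_congr rfl fun a _ => by rw [Complex.re_ofReal_mul, hw1]
    rw [hfun, aux_deriv O hO p hp τ hτ]
    simp only [hw1]
  · have hfun : (fun y' : ℝ => (Fc O p (↑x + ↑y' * Complex.I) τ).im)
        = fun y' => ∑ a ∈ O, qa p τ Complex.im (fun a => (x - a.re) ^ 2) a y' /
            SS O p τ Complex.im (fun a => (x - a.re) ^ 2) y' * a.im := by
      funext y'
      rw [Fc, Complex.im_sum]
      exact Finset.sum_congr rfl fun a _ => by rw [Complex.im_ofReal_mul, hw2]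
    rw [hfun, aux_deriv O hO p hp τ hτ]
    simp only [hw2]
end

section
/- For every τ > 0 and z = x + iy ∈ ℂ, the mixed partial derivatives of the message mean are equal and given by the posterior covariance of real and imaginary parts: ∂Re F/∂y (x+iy, τ) = ∂Im F/∂x (x+iy, τ) = (2/τ)·( Σ_{a∈O} (Re a)(Im a)·w_a(z,τ) − ( Σ_{a∈O} (Re a)·w_a(z,τ) )·( Σ_{a∈O} (Im a)·w_a(z,τ) ) ). -/
open MeasureTheory Filter Topology

noncomputable def Ef (p : ℂ → ℝ) (τ : ℝ) (u k : ℂ → ℝ) (a : ℂ) (t : ℝ) : ℝ :=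
  p a * Real.exp (-((t - u a) ^ 2 + k a) / τ)

lemma Ef_hasDerivAt (p : ℂ → ℝ) {τ : ℝ} (hτ : τ ≠ 0) (u k : ℂ → ℝ) (a : ℂ) (t : ℝ) :
    HasDerivAt (Ef p τ u k a) (Ef p τ u k a t * (-2 * (t - u a) / τ)) t := by
  have h0 : HasDerivAt (fun t' : ℝ => t' - u a) 1 t := (hasDerivAt_id t).sub_const _
  have h1 : HasDerivAt (fun t' : ℝ => -((t' - u a) ^ 2 + k a) / τ) (-2 * (t - u a) / τ) t := by
    have h2 := ((h0.pow 2).add_const (k a)).neg.div_const τ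
    refine h2.congr_deriv ?_
    ring
  have h3 := h1.exp.const_mul (p a)
  refine h3.congr_deriv ?_
  unfold Ef
  ring

lemma S_pos (O : Finset ℂ) (hO : O.Nonempty) (p : ℂ → ℝ) (hp : ∀ a ∈ O, 0 < p a)
    (τ : ℝ) (u k : ℂ → ℝ) (t : ℝ) : 0 < ∑ b ∈ O, Ef p τ u k b t :=
  Finset.sum_pos (fun b hb => mul_pos (hp b hb) (Real.exp_pos _)) hO

lemma main_aux (O : Finset ℂ) (hO : O.Nonempty) (p : ℂ → ℝ) (hp : ∀ a ∈ O, 0 < p a)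
    {τ : ℝ} (hτ : 0 < τ) (u k c : ℂ → ℝ) (t : ℝ) :
    HasDerivAt (fun t' => ∑ a ∈ O, Ef p τ u k a t' / (∑ b ∈ O, Ef p τ u k b t') * c a)
      (2 / τ * ((∑ a ∈ O, Ef p τ u k a t / (∑ b ∈ O, Ef p τ u k b t) * (c a * u a)) -
        (∑ a ∈ O, Ef p τ u k a t / (∑ b ∈ O, Ef p τ u k b t) * c a) *
        (∑ a ∈ O, Ef p τ u k a t / (∑ b ∈ O, Ef p τ u k b t) * u a))) t := by
  set s := ∑ b ∈ O, Ef p τ u k b t with hs_def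
  have hs : 0 < s := S_pos O hO p hp τ u k t
  set B := ∑ b ∈ O, Ef p τ u k b t * u b with hB
  set A := ∑ b ∈ O, Ef p τ u k b t * c b with hA
  set P := ∑ b ∈ O, Ef p τ u k b t * (c b * u b) with hP
  have hS' : HasDerivAt (fun t' => ∑ b ∈ O, Ef p τ u k b t')
      (∑ b ∈ O, Ef p τ u k b t * (-2 * (t - u b) / τ)) t :=
    HasDerivAt.fun_sum fun b _ => Ef_hasDerivAt p hτ.ne' u k b t
  have hterm : ∀ a ∈ O, HasDerivAt
      (fun t' => Ef p τ u k a t' / (∑ b ∈ O, Ef p τ u k b t') * c a)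
      (((Ef p τ u k a t * (-2 * (t - u a) / τ)) * s -
        Ef p τ u k a t * (∑ b ∈ O, Ef p τ u k b t * (-2 * (t - u b) / τ))) / s ^ 2 * c a) t :=
    fun a _ => ((Ef_hasDerivAt p hτ.ne' u k a t).div hS' hs.ne').mul_const _
  have hsum := HasDerivAt.fun_sum hterm
  refine hsum.congr_deriv ?_
  symm
  have hT : (∑ b ∈ O, Ef p τ u k b t * (-2 * (t - u b) / τ)) = -2 / τ * (t * s - B) := by
    have h1 : ∀ b ∈ O, Ef p τ u k b t * (-2 * (t - u b) / τ)
        = (-2 / τ * t) * Ef p τ u k b t + 2 / τ * (Ef p τ u k b t * u b) := fun b _ => by ring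
    rw [Finset.sum_congr rfl h1, Finset.sum_add_distrib, ← Finset.mul_sum, ← Finset.mul_sum]
    rw [hs_def, hB]
    ring
  simp only [hT]
  have hterm2 : ∀ a ∈ O,
      ((Ef p τ u k a t * (-2 * (t - u a) / τ)) * s -
        Ef p τ u k a t * (-2 / τ * (t * s - B))) / s ^ 2 * c a
      = 2 / τ / s ^ 2 * (s * (Ef p τ u k a t * (c a * u a)) - B * (Ef p τ u k a t * c a)) := by
    intro a _
    field_simp
    ring
  rw [Finset.sum_congr rfl hterm2, ← Finset.mul_sum, Finset.sum_sub_distrib,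
    ← Finset.mul_sum, ← Finset.mul_sum, ← hP, ← hA]
  have hdiv : ∀ (X : ℂ → ℝ), (∑ a ∈ O, Ef p τ u k a t / s * X a)
      = (∑ a ∈ O, Ef p τ u k a t * X a) / s := by
    intro X
    rw [Finset.sum_congr rfl fun a _ => div_mul_eq_mul_div (Ef p τ u k a t) s (X a),
      Finset.sum_div]
  rw [hdiv, hdiv, hdiv, ← hP, ← hA, ← hB]
  field_simp

lemma exp_eq_y (τ : ℝ) (x y' : ℝ) (b : ℂ) :
    -(‖↑x + ↑y' * Complex.I - b‖) ^ 2 / τ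
      = -((y' - b.im) ^ 2 + (x - b.re) ^ 2) / τ := by
  rw [Complex.sq_norm, Complex.normSq_apply]
  simp only [Complex.sub_re, Complex.sub_im, Complex.add_re, Complex.add_im,
    Complex.ofReal_re, Complex.ofReal_im, Complex.mul_re, Complex.mul_im,
    Complex.I_re, Complex.I_im]
  ring

lemma exp_eq_x (τ : ℝ) (x' y : ℝ) (b : ℂ) :
    -(‖↑x' + ↑y * Complex.I - b‖) ^ 2 / τ
      = -((x' - b.re) ^ 2 + (y - b.im) ^ 2) / τ := by
  rw [Complex.sq_norm, Complex.normSq_apply]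
  simp only [Complex.sub_re, Complex.sub_im, Complex.add_re, Complex.add_im,
    Complex.ofReal_re, Complex.ofReal_im, Complex.mul_re, Complex.mul_im,
    Complex.I_re, Complex.I_im]
  ring

lemma wC_eq_y (O : Finset ℂ) (p : ℂ → ℝ) (τ : ℝ) (x y : ℝ) (a : ℂ) :
    wC O p (↑x + ↑y * Complex.I) τ a
      = Ef p τ (fun b => b.im) (fun b => (x - b.re) ^ 2) a y
        / ∑ b ∈ O, Ef p τ (fun b => b.im) (fun b => (x - b.re) ^ 2) b y := by
  unfold wC Ef
  simp only [exp_eq_y]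

lemma wC_eq_x (O : Finset ℂ) (p : ℂ → ℝ) (τ : ℝ) (x y : ℝ) (a : ℂ) :
    wC O p (↑x + ↑y * Complex.I) τ a
      = Ef p τ (fun b => b.re) (fun b => (y - b.im) ^ 2) a x
        / ∑ b ∈ O, Ef p τ (fun b => b.re) (fun b => (y - b.im) ^ 2) b x := by
  unfold wC Ef
  simp only [exp_eq_x]

lemma Fre_fun (O : Finset ℂ) (p : ℂ → ℝ) (τ : ℝ) (x : ℝ) :
    (fun y' : ℝ => (Fc O p (↑x + ↑y' * Complex.I) τ).re)
      = fun y' => ∑ a ∈ O, Ef p τ (fun b => b.im) (fun b => (x - b.re) ^ 2) a y'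
          / (∑ b ∈ O, Ef p τ (fun b => b.im) (fun b => (x - b.re) ^ 2) b y') * a.re := by
  funext y'
  rw [Fc, Complex.re_sum]
  refine Finset.sum_congr rfl fun a _ => ?_
  rw [show ((wC O p (↑x + ↑y' * Complex.I) τ a : ℂ) * a).re
      = wC O p (↑x + ↑y' * Complex.I) τ a * a.re from by simp]
  rw [wC_eq_y]

lemma Fim_fun (O : Finset ℂ) (p : ℂ → ℝ) (τ : ℝ) (y : ℝ) :
    (fun x' : ℝ => (Fc O p (↑x' + ↑y * Complex.I) τ).im)
      = fun x' => ∑ a ∈ O, Ef p τ (fun b => b.re) (fun b => (y - b.im) ^ 2) a x'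
          / (∑ b ∈ O, Ef p τ (fun b => b.re) (fun b => (y - b.im) ^ 2) b x') * a.im := by
  funext x'
  rw [Fc, Complex.im_sum]
  refine Finset.sum_congr rfl fun a _ => ?_
  rw [show ((wC O p (↑x' + ↑y * Complex.I) τ a : ℂ) * a).im
      = wC O p (↑x' + ↑y * Complex.I) τ a * a.im from by simp]
  rw [wC_eq_x]

/-- The mixed partial derivatives of the message mean are equal and given by `(2/τ)` times the
posterior covariance of the real and imaginary parts of the constellation point. -/
theorem lama_mixed_partials
    (O : Finset ℂ) (hO : O.Nonempty) (p : ℂ → ℝ)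
    (hp : ∀ a ∈ O, 0 < p a) (hpsum : ∑ a ∈ O, p a = 1)
    (τ : ℝ) (hτ : 0 < τ) (x y : ℝ) :
    deriv (fun y' : ℝ => (Fc O p (↑x + ↑y' * Complex.I) τ).re) y =
      deriv (fun x' : ℝ => (Fc O p (↑x' + ↑y * Complex.I) τ).im) x ∧
    deriv (fun y' : ℝ => (Fc O p (↑x + ↑y' * Complex.I) τ).re) y =
      2 / τ * (∑ a ∈ O, a.re * a.im * wC O p (↑x + ↑y * Complex.I) τ a -
        (∑ a ∈ O, a.re * wC O p (↑x + ↑y * Complex.I) τ a) *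
        (∑ a ∈ O, a.im * wC O p (↑x + ↑y * Complex.I) τ a)) := by
  have hy := main_aux O hO p hp hτ (fun b => b.im) (fun b => (x - b.re) ^ 2) (fun b => b.re) y
  have hx := main_aux O hO p hp hτ (fun b => b.re) (fun b => (y - b.im) ^ 2) (fun b => b.im) x
  have hWy : ∀ a : ℂ, Ef p τ (fun b => b.im) (fun b => (x - b.re) ^ 2) a y /
      (∑ b ∈ O, Ef p τ (fun b => b.im) (fun b => (x - b.re) ^ 2) b y)
      = wC O p (↑x + ↑y * Complex.I) τ a := fun a => (wC_eq_y O p τ x y a).symm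
  have hWx : ∀ a : ℂ, Ef p τ (fun b => b.re) (fun b => (y - b.im) ^ 2) a x /
      (∑ b ∈ O, Ef p τ (fun b => b.re) (fun b => (y - b.im) ^ 2) b x)
      = wC O p (↑x + ↑y * Complex.I) τ a := fun a => (wC_eq_x O p τ x y a).symm
  have hdy : deriv (fun y' : ℝ => (Fc O p (↑x + ↑y' * Complex.I) τ).re) y
      = 2 / τ * (∑ a ∈ O, a.re * a.im * wC O p (↑x + ↑y * Complex.I) τ a -
        (∑ a ∈ O, a.re * wC O p (↑x + ↑y * Complex.I) τ a) *
        (∑ a ∈ O, a.im * wC O p (↑x + ↑y * Complex.I) τ a)) := by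
    rw [Fre_fun O p τ x, hy.deriv]
    simp only [hWy]
    congr 1
    congr 1
    · exact Finset.sum_congr rfl fun a _ => by ring
    congr 1
    · exact Finset.sum_congr rfl fun a _ => by ring
    · exact Finset.sum_congr rfl fun a _ => by ring
  have hdx : deriv (fun x' : ℝ => (Fc O p (↑x' + ↑y * Complex.I) τ).im) x
      = 2 / τ * (∑ a ∈ O, a.re * a.im * wC O p (↑x + ↑y * Complex.I) τ a -
        (∑ a ∈ O, a.re * wC O p (↑x + ↑y * Complex.I) τ a) *
        (∑ a ∈ O, a.im * wC O p (↑x + ↑y * Complex.I) τ a)) := by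
    rw [Fim_fun O p τ y, hx.deriv]
    simp only [hWx]
    rw [show (∑ a ∈ O, wC O p (↑x + ↑y * Complex.I) τ a * (a.im * a.re))
        = ∑ a ∈ O, a.re * a.im * wC O p (↑x + ↑y * Complex.I) τ a from
      Finset.sum_congr rfl fun a _ => by ring]
    rw [show (∑ a ∈ O, wC O p (↑x + ↑y * Complex.I) τ a * a.im)
        = ∑ a ∈ O, a.im * wC O p (↑x + ↑y * Complex.I) τ a from
      Finset.sum_congr rfl fun a _ => by ring]
    rw [show (∑ a ∈ O, wC O p (↑x + ↑y * Complex.I) τ a * a.re)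
        = ∑ a ∈ O, a.re * wC O p (↑x + ↑y * Complex.I) τ a from
      Finset.sum_congr rfl fun a _ => by ring]
    ring
  exact ⟨hdy.trans hdx.symm, hdy⟩
end

section
/- Suppose the constellation satisfies Σ_{a∈O} p_a·a = 0, Σ_{a∈O} p_a·a² = 0, and Σ_{a∈O} p_a·a·|a|² = 0, and let E_s = Σ_{a∈O} p_a·|a|² > 0. Then for every fixed z ∈ ℂ, lim_{τ→∞} (τ/E_s)·F(z,τ) = z. (Second part of Lemma 3: as the postulated noise variance N₀^post → ∞, the suitably scaled nonlinear MMSE estimate converges to the matched-filter output.) -/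
open MeasureTheory Filter Topology

lemma hslope (C : ℝ) :
    Tendsto (fun τ : ℝ => τ * (Real.exp (-C / τ) - 1)) atTop (𝓝 (-C)) := by
  have hderiv : HasDerivAt (fun t : ℝ => Real.exp (-C * t)) (-C) 0 := by
    have := ((hasDerivAt_id (0 : ℝ)).const_mul (-C)).exp
    simpa using this
  have h1 : Tendsto (slope (fun t : ℝ => Real.exp (-C * t)) 0) (𝓝[≠] 0) (𝓝 (-C)) :=
    hasDerivAt_iff_tendsto_slope.mp hderiv
  have h2 : Tendsto (fun τ : ℝ => τ⁻¹) atTop (𝓝[≠] (0 : ℝ)) := by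
    refine tendsto_nhdsWithin_of_tendsto_nhds_of_eventually_within _ tendsto_inv_atTop_zero ?_
    filter_upwards [eventually_ge_atTop 1] with τ hτ
    exact inv_ne_zero (by positivity)
  refine (h1.comp h2).congr' ?_
  filter_upwards [eventually_ge_atTop 1] with τ hτ
  have hτ0 : τ ≠ 0 := by positivity
  simp only [Function.comp, slope_def_field, div_eq_mul_inv]
  field_simp
  simp only [mul_zero, neg_zero, Real.exp_zero, sub_zero, one_mul]

/-- Second part of Lemma 3: if the constellation has vanishing first moment, vanishing second
moment `Σ p_a a² = 0` and vanishing third moment `Σ p_a a |a|² = 0`, then as the postulated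
noise variance `τ → ∞` the scaled nonlinear MMSE estimate `(τ/E_s)·F(z,τ)` converges to the
matched-filter output `z`. -/
theorem lama_scaled_estimate_matched_filter
    (O : Finset ℂ) (hO : O.Nonempty) (p : ℂ → ℝ)
    (hp : ∀ a ∈ O, 0 < p a) (hpsum : ∑ a ∈ O, p a = 1)
    (hm1 : ∑ a ∈ O, (p a : ℂ) * a = 0)
    (hm2 : ∑ a ∈ O, (p a : ℂ) * a ^ 2 = 0)
    (hm3 : ∑ a ∈ O, (p a : ℂ) * a * ((‖a‖ ^ 2 : ℝ) : ℂ) = 0)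
    (Es : ℝ) (hEs : Es = ∑ a ∈ O, p a * ‖a‖ ^ 2) (hEspos : 0 < Es)
    (z : ℂ) :
    Tendsto (fun τ : ℝ => ((τ / Es : ℝ) : ℂ) * Fc O p z τ) atTop (𝓝 z) := by
  classical
  have hEsne : (Es : ℂ) ≠ 0 := by exact_mod_cast hEspos.ne'
  set c : ℂ → ℝ := fun a => ‖z - a‖ ^ 2 with hc
  set D : ℝ → ℝ := fun τ => ∑ a ∈ O, p a * Real.exp (-c a / τ) with hD
  have hDpos : ∀ τ, 0 < D τ := fun τ =>
    Finset.sum_pos (fun a ha => mul_pos (hp a ha) (Real.exp_pos _)) hO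
  set S : ℝ → ℂ := fun τ =>
    ∑ a ∈ O, (p a : ℂ) * a * ((τ * (Real.exp (-c a / τ) - 1) : ℝ) : ℂ) with hS
  have hEsC : ∑ a ∈ O, (p a : ℂ) * ((‖a‖ ^ 2 : ℝ) : ℂ) = (Es : ℂ) := by
    rw [hEs]; push_cast; ring
  -- the key algebraic identity
  have key : ∀ a : ℂ, (p a : ℂ) * a * ((-c a : ℝ) : ℂ) =
      -(z * (starRingEnd ℂ) z) * ((p a : ℂ) * a)
        + (starRingEnd ℂ) z * ((p a : ℂ) * a ^ 2)
        + z * ((p a : ℂ) * ((‖a‖ ^ 2 : ℝ) : ℂ))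
        - ((p a : ℂ) * a * ((‖a‖ ^ 2 : ℝ) : ℂ)) := by
    intro a
    have h1 : ((c a : ℝ) : ℂ) = (z - a) * (starRingEnd ℂ) (z - a) := by
      show ((‖z - a‖ ^ 2 : ℝ) : ℂ) = _
      rw [Complex.sq_norm]; exact (Complex.mul_conj _).symm
    have h2 : ((‖a‖ ^ 2 : ℝ) : ℂ) = a * (starRingEnd ℂ) a := by
      rw [Complex.sq_norm]; exact (Complex.mul_conj _).symm
    rw [Complex.ofReal_neg, h1, h2]
    simp only [map_sub]
    ring
  have hsum : ∑ a ∈ O, (p a : ℂ) * a * ((-c a : ℝ) : ℂ) = (Es : ℂ) * z := by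
    rw [Finset.sum_congr rfl (fun a _ => key a), Finset.sum_sub_distrib,
      Finset.sum_add_distrib, Finset.sum_add_distrib, ← Finset.mul_sum, ← Finset.mul_sum,
      ← Finset.mul_sum, hm1, hm2, hm3, hEsC]
    ring
  have hSlim : Tendsto S atTop (𝓝 ((Es : ℂ) * z)) := by
    have hlim : ∀ a ∈ O, Tendsto
        (fun τ : ℝ => (p a : ℂ) * a * ((τ * (Real.exp (-c a / τ) - 1) : ℝ) : ℂ)) atTop
        (𝓝 ((p a : ℂ) * a * ((-c a : ℝ) : ℂ))) := by
      intro a _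
      exact tendsto_const_nhds.mul
        ((Complex.continuous_ofReal.tendsto _).comp (hslope (c a)))
    have := tendsto_finset_sum O hlim
    rwa [hsum] at this
  -- limit of the denominator
  have hDlim : Tendsto D atTop (𝓝 1) := by
    rw [hD]
    have hlim : ∀ a ∈ O, Tendsto (fun τ : ℝ => p a * Real.exp (-c a / τ)) atTop (𝓝 (p a)) := by
      intro a _
      have h0 : Tendsto (fun τ : ℝ => -c a / τ) atTop (𝓝 0) := by
        simpa [div_eq_mul_inv] using tendsto_inv_atTop_zero.const_mul (-c a)
      have := (Real.continuous_exp.tendsto 0).comp h0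
      simpa using tendsto_const_nhds.mul this
    have := tendsto_finset_sum O hlim
    rwa [hpsum] at this
  have hDC : Tendsto (fun τ => ((Es : ℂ) * (D τ : ℂ))) atTop (𝓝 ((Es : ℂ) * 1)) :=
    tendsto_const_nhds.mul ((Complex.continuous_ofReal.tendsto _).comp hDlim)
  have hfinal := hSlim.div hDC (by simpa using hEsne)
  have : (Es : ℂ) * z / ((Es : ℂ) * 1) = z := by field_simp
  rw [this] at hfinal
  refine hfinal.congr ?_
  intro τ
  have hDne : ((D τ : ℝ) : ℂ) ≠ 0 := by exact_mod_cast (hDpos τ).ne'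
  -- rewrite Fc as a quotient and use first moment
  have hFc : Fc O p z τ =
      (∑ a ∈ O, ((p a * Real.exp (-c a / τ) : ℝ) : ℂ) * a) / (D τ : ℂ) := by
    rw [Fc, Finset.sum_div]
    refine Finset.sum_congr rfl fun a ha => ?_
    rw [wC]
    show ((p a * Real.exp (-c a / τ) / D τ : ℝ) : ℂ) * a = _
    rw [Complex.ofReal_div]
    ring
  have hnum : S τ = (τ : ℂ) * ∑ a ∈ O, ((p a * Real.exp (-c a / τ) : ℝ) : ℂ) * a := by
    have e : ∀ a ∈ O, (p a : ℂ) * a * ((τ * (Real.exp (-c a / τ) - 1) : ℝ) : ℂ)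
        = (τ : ℂ) * (((p a * Real.exp (-c a / τ) : ℝ) : ℂ) * a)
          - (τ : ℂ) * ((p a : ℂ) * a) := by
      intro a _; push_cast; ring
    rw [hS]
    show (∑ a ∈ O, (p a : ℂ) * a * ((τ * (Real.exp (-c a / τ) - 1) : ℝ) : ℂ)) = _
    rw [Finset.sum_congr rfl e, Finset.sum_sub_distrib, ← Finset.mul_sum, ← Finset.mul_sum,
      hm1, mul_zero, sub_zero]
  show S τ / ((Es : ℂ) * (D τ : ℂ)) = _
  rw [hnum, hFc]
  push_cast
  field_simp
end

section
/- In the matched case the variance function equals the MSE function: for every v > 0, Φ(v, v) = Ψ(v, v). Equivalently, Σ_{a∈O} p_a ∫_ℂ G(a + √v·z, v) dμ(z) = Σ_{a∈O} p_a ∫_ℂ |F(a + √v·z, v) − a|² dμ(z). (Content of Corollary 1: with no noise-variance mismatch, the average posterior conditional variance equals the mean-squared error, so the two state-evolution recursions coincide.) -/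
open MeasureTheory Filter Topology

noncomputable def gaussC : Measure ℂ :=
  volume.withDensity fun z => ENNReal.ofReal ((1 / Real.pi) * Real.exp (-(‖z‖) ^ 2))

noncomputable def PsiC (O : Finset ℂ) (p : ℂ → ℝ) (v g : ℝ) : ℝ :=
  ∑ a ∈ O, p a * ∫ z, (‖Fc O p (a + (Real.sqrt v : ℂ) * z) g - a‖) ^ 2 ∂gaussC

noncomputable def PhiC (O : Finset ℂ) (p : ℂ → ℝ) (v g : ℝ) : ℝ :=
  ∑ a ∈ O, p a * ∫ z, Gc O p (a + (Real.sqrt v : ℂ) * z) g ∂gaussC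

/- ---------------- auxiliary lemmas ---------------- -/

section Aux

variable (O : Finset ℂ) (p : ℂ → ℝ)

lemma aux_S_pos (hO : O.Nonempty) (hp : ∀ a ∈ O, 0 < p a) (y : ℂ) (τ : ℝ) :
    0 < ∑ a ∈ O, p a * Real.exp (-(‖y - a‖) ^ 2 / τ) :=
  Finset.sum_pos (fun a ha => mul_pos (hp a ha) (Real.exp_pos _)) hO

lemma aux_wC_nonneg (hO : O.Nonempty) (hp : ∀ a ∈ O, 0 < p a) {a : ℂ} (ha : a ∈ O)
    (y : ℂ) (τ : ℝ) : 0 ≤ wC O p y τ a :=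
  div_nonneg (mul_nonneg (hp a ha).le (Real.exp_pos _).le) (aux_S_pos O p hO hp y τ).le

lemma aux_wC_le_one (hO : O.Nonempty) (hp : ∀ a ∈ O, 0 < p a) {a : ℂ} (ha : a ∈ O)
    (y : ℂ) (τ : ℝ) : wC O p y τ a ≤ 1 := by
  rw [wC, div_le_one (aux_S_pos O p hO hp y τ)]
  exact Finset.single_le_sum (f := fun b => p b * Real.exp (-(‖y - b‖) ^ 2 / τ))
    (fun b hb => mul_nonneg (hp b hb).le (Real.exp_pos _).le) ha

lemma aux_F_bound (hO : O.Nonempty) (hp : ∀ a ∈ O, 0 < p a) (y : ℂ) (τ : ℝ) :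
    ‖Fc O p y τ‖ ≤ ∑ b ∈ O, ‖b‖ := by
  rw [Fc]
  refine (norm_sum_le _ _).trans (Finset.sum_le_sum fun b hb => ?_)
  rw [norm_mul, Complex.norm_real, Real.norm_eq_abs,
    abs_of_nonneg (aux_wC_nonneg O p hO hp hb y τ)]
  calc wC O p y τ b * ‖b‖ ≤ 1 * ‖b‖ := by
        exact mul_le_mul_of_nonneg_right (aux_wC_le_one O p hO hp hb y τ) (norm_nonneg b)
    _ = ‖b‖ := one_mul _

lemma aux_G_bound (hO : O.Nonempty) (hp : ∀ a ∈ O, 0 < p a) (y : ℂ) (τ : ℝ) :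
    |Gc O p y τ| ≤ ∑ b ∈ O, (‖b‖ + ∑ c ∈ O, ‖c‖) ^ 2 := by
  have hbnd : ∀ b ∈ O, wC O p y τ b * (‖b - Fc O p y τ‖) ^ 2
      ≤ (‖b‖ + ∑ c ∈ O, ‖c‖) ^ 2 := by
    intro b hb
    calc wC O p y τ b * (‖b - Fc O p y τ‖) ^ 2
        ≤ 1 * (‖b - Fc O p y τ‖) ^ 2 :=
          mul_le_mul_of_nonneg_right (aux_wC_le_one O p hO hp hb y τ) (by positivity)
      _ = (‖b - Fc O p y τ‖) ^ 2 := one_mul _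
      _ ≤ (‖b‖ + ∑ c ∈ O, ‖c‖) ^ 2 := by
          refine pow_le_pow_left₀ (norm_nonneg _) ?_ 2
          refine (norm_sub_le b _).trans ?_
          exact add_le_add_right (aux_F_bound O p hO hp y τ) _
  have h0 : 0 ≤ Gc O p y τ := by
    refine Finset.sum_nonneg fun b hb => ?_
    exact mul_nonneg (aux_wC_nonneg O p hO hp hb y τ) (by positivity)
  rw [abs_of_nonneg h0, Gc]
  exact Finset.sum_le_sum hbnd

lemma aux_cont_exp (a : ℂ) (τ : ℝ) :
    Continuous fun y : ℂ => Real.exp (-(‖y - a‖) ^ 2 / τ) :=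
  Real.continuous_exp.comp
    ((((continuous_norm.comp (continuous_id.sub continuous_const)).pow 2).neg).div_const τ)

lemma aux_cont_S (τ : ℝ) :
    Continuous fun y : ℂ => ∑ a ∈ O, p a * Real.exp (-(‖y - a‖) ^ 2 / τ) :=
  continuous_finset_sum _ fun a _ => continuous_const.mul (aux_cont_exp a τ)

lemma aux_cont_w (hO : O.Nonempty) (hp : ∀ a ∈ O, 0 < p a) (τ : ℝ) (a : ℂ) :
    Continuous fun y : ℂ => wC O p y τ a :=
  (continuous_const.mul (aux_cont_exp a τ)).div (aux_cont_S O p τ)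
    fun y => (aux_S_pos O p hO hp y τ).ne'

lemma aux_cont_F (hO : O.Nonempty) (hp : ∀ a ∈ O, 0 < p a) (τ : ℝ) :
    Continuous fun y : ℂ => Fc O p y τ :=
  continuous_finset_sum _ fun a _ =>
    (Complex.continuous_ofReal.comp (aux_cont_w O p hO hp τ a)).mul continuous_const

lemma aux_cont_G (hO : O.Nonempty) (hp : ∀ a ∈ O, 0 < p a) (τ : ℝ) :
    Continuous fun y : ℂ => Gc O p y τ :=
  continuous_finset_sum _ fun a _ =>
    (aux_cont_w O p hO hp τ a).mul
      ((continuous_norm.comp (continuous_const.sub (aux_cont_F O p hO hp τ))).pow 2)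

/-- the key pointwise identity -/
lemma aux_key (hO : O.Nonempty) (hp : ∀ a ∈ O, 0 < p a) (y : ℂ) (τ : ℝ) :
    ∑ a ∈ O, p a * (Real.exp (-(‖y - a‖) ^ 2 / τ)
        * (‖Fc O p y τ - a‖) ^ 2)
    = ∑ a ∈ O, p a * (Real.exp (-(‖y - a‖) ^ 2 / τ) * Gc O p y τ) := by
  have hS := (aux_S_pos O p hO hp y τ).ne'
  have : ∑ a ∈ O, p a * (Real.exp (-(‖y - a‖) ^ 2 / τ) * Gc O p y τ)
      = (∑ a ∈ O, p a * Real.exp (-(‖y - a‖) ^ 2 / τ)) * Gc O p y τ := by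
    rw [Finset.sum_mul]; exact Finset.sum_congr rfl fun a _ => by ring
  rw [this, Gc, Finset.mul_sum]
  refine Finset.sum_congr rfl fun a ha => ?_
  rw [wC, norm_sub_rev a (Fc O p y τ)]
  rw [div_mul_eq_mul_div, mul_div_assoc', mul_div_cancel_left₀ _ hS]
  ring

/-- Gaussian integrability on ℂ -/
lemma aux_gauss_integrable {b : ℝ} (hb : 0 < b) :
    Integrable (fun z : ℂ => Real.exp (-b * ‖z‖ ^ 2)) := by
  have h := (GaussianFourier.integrable_cexp_neg_mul_sq_norm_add (V := ℂ) (b := (b : ℂ))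
    (by simpa using hb) 0 0).norm
  refine h.congr (Filter.Eventually.of_forall fun z => ?_)
  show ‖Complex.exp _‖ = _
  rw [show (-(b : ℂ) * (‖z‖ : ℂ) ^ 2 + 0 * ((inner ℝ (0 : ℂ) z : ℝ) : ℂ))
      = ((-b * ‖z‖ ^ 2 : ℝ) : ℂ) by push_cast; ring,
    Complex.norm_exp, Complex.ofReal_re]

lemma aux_integrable {h : ℂ → ℝ} (hc : Continuous h) {C : ℝ} (hb : ∀ y, |h y| ≤ C)
    (a : ℂ) {v : ℝ} (hv : 0 < v) :
    Integrable (fun y : ℂ => Real.exp (-(‖y - a‖) ^ 2 / v) * h y) := by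
  have g1 : Integrable (fun z : ℂ => Real.exp (-v⁻¹ * ‖z‖ ^ 2)) :=
    aux_gauss_integrable (inv_pos.mpr hv)
  have g2 : Integrable (fun y : ℂ => C * Real.exp (-v⁻¹ * ‖y - a‖ ^ 2)) := by
    have := g1.comp_add_right (-a)
    simpa [sub_eq_add_neg] using this.const_mul C
  refine g2.mono' ((aux_cont_exp a v).mul hc).aestronglyMeasurable
    (Filter.Eventually.of_forall fun y => ?_)
  have hexp : Real.exp (-(‖y - a‖) ^ 2 / v) = Real.exp (-v⁻¹ * ‖y - a‖ ^ 2) := by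
    ring_nf
  rw [Real.norm_eq_abs, abs_mul, abs_of_nonneg (Real.exp_pos _).le, hexp, mul_comm C]
  exact mul_le_mul_of_nonneg_left (hb y) (Real.exp_pos _).le

/-- change of variables -/
lemma aux_cov (h : ℂ → ℝ) (hc : Continuous h) (a : ℂ) {v : ℝ} (hv : 0 < v) :
    ∫ z, h (a + (Real.sqrt v : ℂ) * z) ∂gaussC
      = (Real.pi * v)⁻¹ * ∫ y, Real.exp (-(‖y - a‖) ^ 2 / v) * h y := by
  have hπ : (0 : ℝ) < Real.pi := Real.pi_pos
  -- left side: unfold the density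
  have hρmeas : Measurable fun z : ℂ =>
      ((1 / Real.pi) * Real.exp (-(‖z‖) ^ 2)).toNNReal :=
    ((continuous_const.mul
      (Real.continuous_exp.comp ((continuous_norm.pow 2).neg))).measurable).real_toNNReal
  have hden : gaussC = volume.withDensity
      (fun z : ℂ => (((1 / Real.pi) * Real.exp (-(‖z‖) ^ 2)).toNNReal : ENNReal)) := rfl
  have hL : ∫ z, h (a + (Real.sqrt v : ℂ) * z) ∂gaussC
      = ∫ z, (1 / Real.pi) * (Real.exp (-(‖z‖) ^ 2)
          * h (a + (Real.sqrt v : ℂ) * z)) := by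
    rw [hden, integral_withDensity_eq_integral_smul hρmeas]
    refine integral_congr_ae (Filter.Eventually.of_forall fun z => ?_)
    dsimp only
    rw [NNReal.smul_def, Real.coe_toNNReal _ (by positivity), smul_eq_mul]
    ring
  have hR : ∫ y, Real.exp (-(‖y - a‖) ^ 2 / v) * h y
      = v * ∫ z, Real.exp (-(‖z‖) ^ 2) * h (a + (Real.sqrt v : ℂ) * z) := by
    have h1 : ∫ y, Real.exp (-(‖y - a‖) ^ 2 / v) * h y
        = ∫ x, Real.exp (-(‖x‖) ^ 2 / v) * h (a + x) := by
      rw [← integral_add_left_eq_self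
        (fun y => Real.exp (-(‖y - a‖) ^ 2 / v) * h y) a]
      simp [add_sub_cancel_left]
    have hsq : Real.sqrt v ^ 2 = v := Real.sq_sqrt hv.le
    have h2 := MeasureTheory.Measure.integral_comp_smul volume
      (fun x : ℂ => Real.exp (-(‖x‖) ^ 2 / v) * h (a + x)) (Real.sqrt v)
    rw [Complex.finrank_real_complex, hsq, abs_of_nonneg (inv_nonneg.mpr hv.le),
      smul_eq_mul] at h2
    have h3 : ∀ z : ℂ,
        (fun x : ℂ => Real.exp (-(‖x‖) ^ 2 / v) * h (a + x)) (Real.sqrt v • z)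
        = Real.exp (-(‖z‖) ^ 2) * h (a + (Real.sqrt v : ℂ) * z) := by
      intro z
      have habs : ‖(Real.sqrt v : ℂ) * z‖ = Real.sqrt v * ‖z‖ := by
        rw [norm_mul, Complex.norm_real, Real.norm_eq_abs, abs_of_nonneg (Real.sqrt_nonneg v)]
      simp only [Complex.real_smul, habs]
      congr 1
      rw [mul_pow, hsq]
      field_simp
    simp only [h3] at h2
    have h4 : v * ∫ z : ℂ, Real.exp (-(‖z‖) ^ 2)
        * h (a + (Real.sqrt v : ℂ) * z) = ∫ x : ℂ, Real.exp (-(‖x‖) ^ 2 / v)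
        * h (a + x) := by
      rw [h2]
      field_simp
    rw [h1, ← h4]
  rw [hL, hR, integral_const_mul]
  field_simp

end Aux

/-- Corollary 1: with no noise-variance mismatch the variance function equals the MSE
function, `Φ(v, v) = Ψ(v, v)` for every `v > 0`. -/
theorem lama_matched_variance_eq_mse
    (O : Finset ℂ) (hO : O.Nonempty) (p : ℂ → ℝ)
    (hp : ∀ a ∈ O, 0 < p a) (hpsum : ∑ a ∈ O, p a = 1) :
    ∀ v : ℝ, 0 < v → PhiC O p v v = PsiC O p v v := by
  intro v hv
  have hcF := aux_cont_F O p hO hp v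
  have hcG := aux_cont_G O p hO hp v
  have hcA : ∀ a : ℂ, Continuous fun y : ℂ => (‖Fc O p y v - a‖) ^ 2 :=
    fun a => (continuous_norm.comp (hcF.sub continuous_const)).pow 2
  have hGb : ∀ y, |Gc O p y v| ≤ ∑ b ∈ O, (‖b‖ + ∑ c ∈ O, ‖c‖) ^ 2 :=
    fun y => aux_G_bound O p hO hp y v
  have hAb : ∀ a : ℂ, ∀ y, |(‖Fc O p y v - a‖) ^ 2|
      ≤ ((∑ c ∈ O, ‖c‖) + ‖a‖) ^ 2 := by
    intro a y
    rw [abs_of_nonneg (by positivity)]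
    refine pow_le_pow_left₀ (norm_nonneg _) ?_ 2
    exact (norm_sub_le _ _).trans (add_le_add_left (aux_F_bound O p hO hp y v) _)
  rw [PhiC, PsiC]
  calc
    ∑ a ∈ O, p a * ∫ z, Gc O p (a + (Real.sqrt v : ℂ) * z) v ∂gaussC
        = ∑ a ∈ O, (Real.pi * v)⁻¹ *
            ∫ y, p a * (Real.exp (-(‖y - a‖) ^ 2 / v) * Gc O p y v) := by
          refine Finset.sum_congr rfl fun a ha => ?_
          rw [aux_cov (fun y => Gc O p y v) hcG a hv, integral_const_mul]
          ring
    _ = (Real.pi * v)⁻¹ * ∫ y, ∑ a ∈ O,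
          p a * (Real.exp (-(‖y - a‖) ^ 2 / v) * Gc O p y v) := by
          rw [← Finset.mul_sum, ← integral_finset_sum _
            (fun a _ => (aux_integrable hcG hGb a hv).const_mul (p a))]
    _ = (Real.pi * v)⁻¹ * ∫ y, ∑ a ∈ O,
          p a * (Real.exp (-(‖y - a‖) ^ 2 / v)
            * (‖Fc O p y v - a‖) ^ 2) := by
          congr 1
          exact integral_congr_ae
            (Filter.Eventually.of_forall fun y => (aux_key O p hO hp y v).symm)
    _ = ∑ a ∈ O, (Real.pi * v)⁻¹ *
          ∫ y, p a * (Real.exp (-(‖y - a‖) ^ 2 / v)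
            * (‖Fc O p y v - a‖) ^ 2) := by
          rw [integral_finset_sum _
            (fun a _ => (aux_integrable (hcA a) (hAb a) a hv).const_mul (p a)),
            Finset.mul_sum]
    _ = ∑ a ∈ O, p a * ∫ z,
          (‖Fc O p (a + (Real.sqrt v : ℂ) * z) v - a‖) ^ 2 ∂gaussC := by
          refine Finset.sum_congr rfl fun a ha => ?_
          rw [aux_cov (fun y => (‖Fc O p y v - a‖) ^ 2) (hcA a) a hv,
            integral_const_mul]
          ring
end

section
/- The matched MSE vanishes in the small-noise limit: lim_{v → 0⁺} Ψ(v, v) = 0. (Part of Lemma 5.) -/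
open MeasureTheory Filter Topology

lemma denomC_pos (O : Finset ℂ) (hO : O.Nonempty) (p : ℂ → ℝ) (hp : ∀ a ∈ O, 0 < p a)
    (z : ℂ) (τ : ℝ) :
    0 < ∑ a' ∈ O, p a' * Real.exp (-(‖z - a'‖) ^ 2 / τ) :=
  Finset.sum_pos (fun a' ha' => mul_pos (hp a' ha') (Real.exp_pos _)) hO

lemma wC_nonneg (O : Finset ℂ) (hO : O.Nonempty) (p : ℂ → ℝ) (hp : ∀ a ∈ O, 0 < p a)
    (ha : a ∈ O) (z : ℂ) (τ : ℝ) : 0 ≤ wC O p z τ a :=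
  div_nonneg (mul_nonneg (hp a ha).le (Real.exp_pos _).le) (denomC_pos O hO p hp z τ).le

lemma wC_sum (O : Finset ℂ) (hO : O.Nonempty) (p : ℂ → ℝ) (hp : ∀ a ∈ O, 0 < p a)
    (z : ℂ) (τ : ℝ) : ∑ a ∈ O, wC O p z τ a = 1 := by
  unfold wC
  rw [← Finset.sum_div, div_self (denomC_pos O hO p hp z τ).ne']

lemma Fc_norm_le (O : Finset ℂ) (hO : O.Nonempty) (p : ℂ → ℝ) (hp : ∀ a ∈ O, 0 < p a)
    (z : ℂ) (τ : ℝ) : ‖Fc O p z τ‖ ≤ O.sup' hO (fun b => ‖b‖) := by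
  set R := O.sup' hO (fun b => ‖b‖) with hR
  calc ‖Fc O p z τ‖ ≤ ∑ a ∈ O, ‖(wC O p z τ a : ℂ) * a‖ := norm_sum_le _ _
    _ ≤ ∑ a ∈ O, wC O p z τ a * R := by
        apply Finset.sum_le_sum
        intro a ha
        rw [norm_mul, Complex.norm_real, Real.norm_of_nonneg (wC_nonneg O hO p hp ha z τ)]
        exact mul_le_mul_of_nonneg_left
          (by exact Finset.le_sup' _ ha)
          (wC_nonneg O hO p hp ha z τ)
    _ = R := by rw [← Finset.sum_mul, wC_sum O hO p hp, one_mul]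

instance : IsFiniteMeasure gaussC := by
  constructor
  have hR : Integrable (fun x : ℝ => Real.exp (-x ^ 2)) volume := by
    simpa using integrable_exp_neg_mul_sq (one_pos)
  have hprod : Integrable (fun q : ℝ × ℝ => Real.exp (-q.1 ^ 2) * Real.exp (-q.2 ^ 2))
      volume := hR.mul_prod hR
  have h2 : Integrable (fun z : ℂ => Real.exp (-(z.re) ^ 2) * Real.exp (-(z.im) ^ 2))
      volume := by
    rw [← Complex.volume_preserving_equiv_real_prod.integrable_comp_emb
      Complex.measurableEquivRealProd.measurableEmbedding] at hprod
    exact hprod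
  have h3 : Integrable (fun z : ℂ => (1 / Real.pi) * Real.exp (-(‖z‖) ^ 2)) volume := by
    apply Integrable.const_mul
    apply h2.congr
    filter_upwards with z
    rw [← Real.exp_add, Complex.sq_norm, Complex.normSq_apply]
    ring_nf
  rw [gaussC, withDensity_apply _ MeasurableSet.univ, setLIntegral_univ]
  exact h3.lintegral_lt_top

set_option maxHeartbeats 1000000 in
lemma wC_tendsto_zero (O : Finset ℂ) (hO : O.Nonempty) (p : ℂ → ℝ) (hp : ∀ a ∈ O, 0 < p a)
    {a a' : ℂ} (ha : a ∈ O) (ha' : a' ∈ O) (hne : a' ≠ a) (z : ℂ) :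
    Tendsto (fun v : ℝ => wC O p (a + (Real.sqrt v : ℂ) * z) v a') (𝓝[>] 0) (𝓝 0) := by
  set K : ℝ := Complex.normSq (a - a') with hK
  set c : ℝ := ((a - a') * (starRingEnd ℂ) z).re with hc
  have hKpos : 0 < K := Complex.normSq_pos.mpr (sub_ne_zero.mpr hne.symm)
  set E : ℝ → ℝ := fun v => (-K - 2 * Real.sqrt v * c) / v with hE
  -- step A : E → atBot
  have hsq : Tendsto Real.sqrt (𝓝[>] 0) (𝓝[>] 0) := by
    apply tendsto_nhdsWithin_of_tendsto_nhds_of_eventually_within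
    · exact (Real.continuous_sqrt.tendsto' 0 0 (by simp)).mono_left nhdsWithin_le_nhds
    · filter_upwards [self_mem_nhdsWithin] with v hv
      exact Real.sqrt_pos.mpr hv
  have hinv : Tendsto (fun v : ℝ => (Real.sqrt v)⁻¹) (𝓝[>] 0) atTop :=
    tendsto_inv_nhdsGT_zero.comp hsq
  have hb : Tendsto (fun v : ℝ => -(K * (Real.sqrt v)⁻¹) - 2 * c) (𝓝[>] 0) atBot :=
    tendsto_atBot_add_const_right _ _
      (tendsto_neg_atTop_atBot.comp (hinv.const_mul_atTop hKpos))
  have hEbot : Tendsto E (𝓝[>] 0) atBot := by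
    apply Tendsto.congr' _ (hinv.atTop_mul_atBot₀ hb)
    filter_upwards [self_mem_nhdsWithin] with v hv
    have hs : 0 < Real.sqrt v := Real.sqrt_pos.mpr hv
    have hv2 : Real.sqrt v * Real.sqrt v = v := Real.mul_self_sqrt hv.le
    have hv' : (0:ℝ) < v := hv
    rw [hE]
    rw [eq_div_iff hv'.ne']
    rw [← hv2]
    field_simp
    rw [Real.sqrt_sq hs.le]
  -- step B : squeeze
  have hg : Tendsto (fun v : ℝ => p a' / p a * Real.exp (E v)) (𝓝[>] 0) (𝓝 0) := by
    have := (Real.tendsto_exp_atBot.comp hEbot).const_mul (p a' / p a)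
    simpa using this
  apply squeeze_zero' (g := fun v => p a' / p a * Real.exp (E v))
  · filter_upwards [self_mem_nhdsWithin] with v hv
    exact wC_nonneg O hO p hp ha' _ _
  pick_goal 2
  · exact hg
  · filter_upwards [self_mem_nhdsWithin] with v hv
    set z' : ℂ := a + (Real.sqrt v : ℂ) * z with hz'
    have hNa : 0 < p a * Real.exp (-(‖z' - a‖) ^ 2 / v) :=
      mul_pos (hp a ha) (Real.exp_pos _)
    have hD : p a * Real.exp (-(‖z' - a‖) ^ 2 / v) ≤
        ∑ b ∈ O, p b * Real.exp (-(‖z' - b‖) ^ 2 / v) :=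
      Finset.single_le_sum (f := fun b => p b * Real.exp (-(‖z' - b‖) ^ 2 / v))
        (fun b hb => (mul_pos (hp b hb) (Real.exp_pos _)).le) ha
    have hstep : wC O p z' v a' ≤
        (p a' * Real.exp (-(‖z' - a'‖) ^ 2 / v)) /
        (p a * Real.exp (-(‖z' - a‖) ^ 2 / v)) := by
      rw [wC]
      gcongr
      exact mul_nonneg (hp a' ha').le (Real.exp_pos _).le
    refine hstep.trans (le_of_eq ?_)
    rw [mul_div_mul_comm, ← Real.exp_sub]
    congr 1
    have h1 : z' - a = (Real.sqrt v : ℂ) * z := by rw [hz']; ring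
    have h2 : z' - a' = (a - a') + (Real.sqrt v : ℂ) * z := by rw [hz']; ring
    have hq : -(‖z' - a'‖) ^ 2 / v - -(‖z' - a‖) ^ 2 / v = E v := by
      rw [h1, h2, Complex.sq_norm, Complex.sq_norm, Complex.normSq_add]
      have h3 : ((a - a') * (starRingEnd ℂ) ((Real.sqrt v : ℂ) * z)).re
          = Real.sqrt v * c := by
        rw [map_mul, Complex.conj_ofReal, show (a - a') * ((Real.sqrt v : ℂ) *
          (starRingEnd ℂ) z) = (Real.sqrt v : ℂ) * ((a - a') * (starRingEnd ℂ) z) by ring,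
          Complex.re_ofReal_mul]
      rw [h3, ← hK]
      simp only [hE]
      rw [div_sub_div_same]
      congr 1
      ring
    rw [hq]

lemma Fc_tendsto (O : Finset ℂ) (hO : O.Nonempty) (p : ℂ → ℝ) (hp : ∀ a ∈ O, 0 < p a)
    {a : ℂ} (ha : a ∈ O) (z : ℂ) :
    Tendsto (fun v : ℝ => Fc O p (a + (Real.sqrt v : ℂ) * z) v) (𝓝[>] 0) (𝓝 a) := by
  have hrepr : ∀ v : ℝ, Fc O p (a + (Real.sqrt v : ℂ) * z) v - a
      = ∑ a' ∈ O, (wC O p (a + (Real.sqrt v : ℂ) * z) v a' : ℂ) * (a' - a) := by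
    intro v
    set z' : ℂ := a + (Real.sqrt v : ℂ) * z
    have hs : (∑ a' ∈ O, ((wC O p z' v a' : ℝ) : ℂ)) = 1 := by
      rw [← Complex.ofReal_sum, wC_sum O hO p hp, Complex.ofReal_one]
    calc Fc O p z' v - a = (∑ a' ∈ O, (wC O p z' v a' : ℂ) * a')
          - (∑ a' ∈ O, ((wC O p z' v a' : ℝ) : ℂ)) * a := by rw [hs, one_mul, Fc]
      _ = ∑ a' ∈ O, (wC O p z' v a' : ℂ) * (a' - a) := by
          rw [Finset.sum_mul, ← Finset.sum_sub_distrib]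
          exact Finset.sum_congr rfl (fun b _ => by ring)
  have h0 : Tendsto (fun v : ℝ => Fc O p (a + (Real.sqrt v : ℂ) * z) v - a)
      (𝓝[>] 0) (𝓝 0) := by
    simp only [hrepr]
    have : Tendsto (fun v : ℝ => ∑ a' ∈ O,
        (wC O p (a + (Real.sqrt v : ℂ) * z) v a' : ℂ) * (a' - a)) (𝓝[>] 0)
        (𝓝 (∑ a' ∈ O, (0 : ℂ))) := by
      apply tendsto_finset_sum
      intro a' ha'
      by_cases h : a' = a
      · simp [h]
      · have hw := wC_tendsto_zero O hO p hp ha ha' h z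
        have := ((Complex.continuous_ofReal.tendsto 0).comp hw).mul_const (a' - a)
        simpa using this
    simpa using this
  have := h0.add_const a
  simpa using this

lemma Fc_continuous (O : Finset ℂ) (hO : O.Nonempty) (p : ℂ → ℝ) (hp : ∀ a ∈ O, 0 < p a)
    (τ : ℝ) : Continuous fun z => Fc O p z τ := by
  apply continuous_finset_sum
  intro b hb
  apply Continuous.mul _ continuous_const
  apply Complex.continuous_ofReal.comp
  unfold wC
  have hterm : ∀ b : ℂ, Continuous fun z : ℂ =>
      p b * Real.exp (-(‖z - b‖) ^ 2 / τ) := by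
    intro b
    exact continuous_const.mul (Real.continuous_exp.comp
      ((((continuous_norm.comp (continuous_id.sub continuous_const)).pow 2).neg).div_const
        τ))
  apply Continuous.div (hterm b) (continuous_finset_sum _ (fun b _ => hterm b))
  intro z
  exact (denomC_pos O hO p hp z τ).ne'

lemma integral_tendsto (O : Finset ℂ) (hO : O.Nonempty) (p : ℂ → ℝ) (hp : ∀ a ∈ O, 0 < p a)
    {a : ℂ} (ha : a ∈ O) :
    Tendsto (fun v : ℝ => ∫ z, (‖Fc O p (a + (Real.sqrt v : ℂ) * z) v - a‖) ^ 2
      ∂gaussC) (𝓝[>] 0) (𝓝 0) := by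
  set R := O.sup' hO (fun b => ‖b‖) with hR
  have hRnn : 0 ≤ R := le_trans (norm_nonneg a) (Finset.le_sup' _ ha)
  have h := tendsto_integral_filter_of_dominated_convergence
    (μ := gaussC) (l := 𝓝[>] (0:ℝ)) (f := fun _ => (0:ℝ))
    (F := fun v z => (‖Fc O p (a + (Real.sqrt v : ℂ) * z) v - a‖) ^ 2)
    (bound := fun _ => (R + ‖a‖) ^ 2)
    ?_ ?_ ?_ ?_
  · simpa using h
  · filter_upwards with v
    apply Continuous.aestronglyMeasurable
    have : Continuous fun z : ℂ => Fc O p (a + (Real.sqrt v : ℂ) * z) v - a :=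
      ((Fc_continuous O hO p hp v).comp (by fun_prop)).sub continuous_const
    exact (continuous_norm.comp this).pow 2
  · filter_upwards with v
    filter_upwards with z
    rw [Real.norm_of_nonneg (by positivity)]
    apply pow_le_pow_left₀ (norm_nonneg _)
    calc ‖Fc O p (a + (Real.sqrt v : ℂ) * z) v - a‖
        ≤ ‖Fc O p (a + (Real.sqrt v : ℂ) * z) v‖ + ‖a‖ := by
          exact norm_sub_le _ _
      _ ≤ R + ‖a‖ := by
          apply add_le_add_left
          exact Fc_norm_le O hO p hp _ _
  · exact integrable_const _
  · filter_upwards with z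
    have hcont : Continuous fun w : ℂ => (‖w - a‖) ^ 2 :=
      (continuous_norm.comp ((continuous_id.sub continuous_const))).pow 2
    have := (hcont.tendsto a).comp (Fc_tendsto O hO p hp ha z)
    simpa using (by exact this : Tendsto (fun v : ℝ => (‖Fc O p (a + (Real.sqrt v : ℂ) * z) v - a‖) ^ 2) (𝓝[>] 0) (𝓝 ((‖a - a‖) ^ 2)))

/-- Part of Lemma 5: the matched MSE vanishes in the small-noise limit,
`Ψ(v, v) → 0` as `v → 0⁺`. -/
theorem lama_mse_small_noise_limit
    (O : Finset ℂ) (hO : O.Nonempty) (p : ℂ → ℝ)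
    (hp : ∀ a ∈ O, 0 < p a) (hpsum : ∑ a ∈ O, p a = 1) :
    Tendsto (fun v : ℝ => PsiC O p v v) (𝓝[>] 0) (𝓝 0) := by
  have : Tendsto (fun v : ℝ => ∑ a ∈ O, p a *
      ∫ z, (‖Fc O p (a + (Real.sqrt v : ℂ) * z) v - a‖) ^ 2 ∂gaussC)
      (𝓝[>] 0) (𝓝 (∑ a ∈ O, (0:ℝ))) := by
    apply tendsto_finset_sum
    intro a ha
    have := (integral_tendsto O hO p hp ha).const_mul (p a)
    simpa using this
  simpa [PsiC] using this
end

section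
/- Exact recovery below the ERT (state-evolution form of Theorem 3): assume ψ is continuous on (0,∞) and let β > 0 satisfy β·ψ(x) < x for every x > 0 (i.e., β is strictly below the exact recovery threshold β_O^max = inf_{x>0} x/ψ(x)). Define the noiseless state-evolution sequence by x₁ = β·Var and x_{t+1} = β·ψ(x_t) when x_t > 0, x_{t+1} = 0 when x_t = 0. Then x_t → 0 as t → ∞, i.e., the effective noise variance of LAMA converges to zero and LAMA perfectly recovers the transmitted signal. -/
open MeasureTheory Filter Topology

/-- State-evolution form of Theorem 3 (exact recovery below the ERT): if `β·ψ(x) < x` for all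
`x > 0`, then the noiseless state-evolution sequence started at `x₁ = β·Var` converges to
zero. -/
theorem lama_exact_recovery_below_ert
    (O : Finset ℂ) (hO : O.Nonempty) (p : ℂ → ℝ)
    (hp : ∀ a ∈ O, 0 < p a) (hpsum : ∑ a ∈ O, p a = 1)
    (m : ℂ) (hm : m = ∑ a ∈ O, (p a : ℂ) * a)
    (Var : ℝ) (hVar : Var = ∑ a ∈ O, p a * ‖a - m‖ ^ 2)
    (hcont : ContinuousOn (fun v : ℝ => PsiC O p v v) (Set.Ioi 0))
    (β : ℝ) (hβ : 0 < β)
    (hbelow : ∀ x : ℝ, 0 < x → β * PsiC O p x x < x)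
    (x : ℕ → ℝ) (hx1 : x 1 = β * Var)
    (hrec_pos : ∀ t : ℕ, 1 ≤ t → 0 < x t → x (t + 1) = β * PsiC O p (x t) (x t))
    (hrec_zero : ∀ t : ℕ, 1 ≤ t → x t = 0 → x (t + 1) = 0) :
    Tendsto x atTop (𝓝 0) := by
  -- ψ is nonnegative
  have hψ : ∀ v : ℝ, 0 ≤ PsiC O p v v := by
    intro v
    apply Finset.sum_nonneg
    intro a ha
    exact mul_nonneg (hp a ha).le (integral_nonneg fun z => sq_nonneg _)
  have hVar0 : 0 ≤ Var := by
    rw [hVar]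
    exact Finset.sum_nonneg fun a ha => mul_nonneg (hp a ha).le (sq_nonneg _)
  set y : ℕ → ℝ := fun n => x (n + 1) with hy
  have hy0 : ∀ n, 0 ≤ y n := by
    intro n
    induction n with
    | zero => simpa [hy, hx1] using mul_nonneg hβ.le hVar0
    | succ k ih =>
      rcases ih.lt_or_eq with h | h
      · rw [show y (k+1) = x (k+1+1) from rfl, hrec_pos (k+1) (by omega) h]
        exact mul_nonneg hβ.le (hψ _)
      · rw [show y (k+1) = x (k+1+1) from rfl, hrec_zero (k+1) (by omega) h.symm]
  have hanti : Antitone y := by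
    apply antitone_nat_of_succ_le
    intro n
    rcases (hy0 n).lt_or_eq with h | h
    · rw [show y (n+1) = x (n+1+1) from rfl, hrec_pos (n+1) (by omega) h]
      exact (hbelow _ h).le
    · rw [show y (n+1) = x (n+1+1) from rfl, hrec_zero (n+1) (by omega) h.symm, ← h]
  have hbdd : BddBelow (Set.range y) := ⟨0, by rintro _ ⟨n, rfl⟩; exact hy0 n⟩
  set L := ⨅ n, y n with hL
  have htend : Tendsto y atTop (𝓝 L) := tendsto_atTop_ciInf hanti hbdd
  have hL0 : 0 ≤ L := le_ciInf hy0
  have hLle : ∀ n, L ≤ y n := fun n => ciInf_le hbdd n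
  -- show L = 0
  have hLzero : L = 0 := by
    by_contra hne
    have hLpos : 0 < L := lt_of_le_of_ne hL0 (Ne.symm hne)
    have hypos : ∀ n, 0 < y n := fun n => lt_of_lt_of_le hLpos (hLle n)
    have htend' : Tendsto y atTop (𝓝[Set.Ioi 0] L) :=
      tendsto_nhdsWithin_of_tendsto_nhds_of_eventually_within _ htend
        (Eventually.of_forall fun n => hypos n)
    have hcw : Tendsto (fun v : ℝ => PsiC O p v v) (𝓝[Set.Ioi 0] L)
        (𝓝 (PsiC O p L L)) := hcont L hLpos
    have h1 : Tendsto (fun n => β * PsiC O p (y n) (y n)) atTop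
        (𝓝 (β * PsiC O p L L)) := (hcw.comp htend').const_mul β
    have h2 : Tendsto (fun n => y (n + 1)) atTop (𝓝 L) :=
      htend.comp (tendsto_add_atTop_nat 1)
    have heq : (fun n => y (n + 1)) = fun n => β * PsiC O p (y n) (y n) := by
      funext n
      rw [show y (n+1) = x (n+1+1) from rfl, hrec_pos (n+1) (by omega) (hypos n)]
    rw [heq] at h2
    have : L = β * PsiC O p L L := tendsto_nhds_unique h2 h1
    exact absurd (hbelow L hLpos) (by rw [← this]; exact lt_irrefl L)
  rw [hLzero] at htend
  exact (tendsto_add_atTop_iff_nat 1).mp htend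
end

section
/- Separable decomposition of the message mean and variance (part of Lemma 8): under the separable structure, for all x, y ∈ ℝ and τ > 0, the posterior weights factor as w_{a+ib}(x+iy, τ) = w^R_a(x, τ/2)·w^R_b(y, τ/2) for all a, b ∈ R, and consequently F(x + iy, τ) = F^R(x, τ/2) + i·F^R(y, τ/2) and G(x + iy, τ) = G^R(x, τ/2) + G^R(y, τ/2). -/
open MeasureTheory Filter Topology

noncomputable def wR (R : Finset ℝ) (q : ℝ → ℝ) (x τ a : ℝ) : ℝ :=
  q a * Real.exp (-(x - a) ^ 2 / (2 * τ)) /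
    ∑ a' ∈ R, q a' * Real.exp (-(x - a') ^ 2 / (2 * τ))

noncomputable def FR (R : Finset ℝ) (q : ℝ → ℝ) (x τ : ℝ) : ℝ :=
  ∑ a ∈ R, wR R q x τ a * a

noncomputable def GR (R : Finset ℝ) (q : ℝ → ℝ) (x τ : ℝ) : ℝ :=
  ∑ a ∈ R, wR R q x τ a * (a - FR R q x τ) ^ 2

/-- Part of Lemma 8 (separable decomposition): for a separable constellation
`O = {a + ib : a, b ∈ R}` with product prior, the posterior weights factor, and the complex
message mean and variance decompose into their real counterparts at parameter `τ/2`. -/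
theorem lama_separable_decomposition
    (R : Finset ℝ) (hR : R.Nonempty) (q : ℝ → ℝ)
    (hq : ∀ a ∈ R, 0 < q a) (hqsum : ∑ a ∈ R, q a = 1)
    (O : Finset ℂ)
    (hO : O = (R ×ˢ R).image fun ab : ℝ × ℝ => (ab.1 : ℂ) + (ab.2 : ℂ) * Complex.I)
    (p : ℂ → ℝ)
    (hp : ∀ a ∈ R, ∀ b ∈ R, p ((a : ℂ) + (b : ℂ) * Complex.I) = q a * q b)
    (τ : ℝ) (hτ : 0 < τ) (x y : ℝ) :
    (∀ a ∈ R, ∀ b ∈ R,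
      wC O p ((x : ℂ) + (y : ℂ) * Complex.I) τ ((a : ℂ) + (b : ℂ) * Complex.I) =
        wR R q x (τ / 2) a * wR R q y (τ / 2) b) ∧
    Fc O p ((x : ℂ) + (y : ℂ) * Complex.I) τ =
      (FR R q x (τ / 2) : ℂ) + (FR R q y (τ / 2) : ℂ) * Complex.I ∧
    Gc O p ((x : ℂ) + (y : ℂ) * Complex.I) τ = GR R q x (τ / 2) + GR R q y (τ / 2) := by
  have h2τ : 2 * (τ / 2) = τ := by ring
  have hinj : ∀ ab ∈ R ×ˢ R, ∀ cd ∈ R ×ˢ R,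
      ((fun ab : ℝ × ℝ => (ab.1 : ℂ) + (ab.2 : ℂ) * Complex.I) ab =
       (fun ab : ℝ × ℝ => (ab.1 : ℂ) + (ab.2 : ℂ) * Complex.I) cd) → ab = cd := by
    rintro ⟨a, b⟩ _ ⟨c, d⟩ _ h
    simp only at h
    have h1 := congrArg Complex.re h
    have h2 := congrArg Complex.im h
    simp at h1 h2
    exact Prod.ext h1 h2
  have habs : ∀ a b : ℝ,
      (‖((x:ℂ)+(y:ℂ)*Complex.I) - ((a:ℂ)+(b:ℂ)*Complex.I)‖)^2
        = (x-a)^2 + (y-b)^2 := by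
    intro a b
    rw [Complex.sq_norm, Complex.normSq_apply]
    simp
    ring
  -- single-coordinate notation
  set ex : ℝ → ℝ := fun a => q a * Real.exp (-(x - a) ^ 2 / τ) with hex
  set ey : ℝ → ℝ := fun b => q b * Real.exp (-(y - b) ^ 2 / τ) with hey
  have hwx : ∀ a, wR R q x (τ / 2) a = ex a / ∑ a' ∈ R, ex a' := by
    intro a; rw [wR, h2τ]
  have hwy : ∀ b, wR R q y (τ / 2) b = ey b / ∑ b' ∈ R, ey b' := by
    intro b; rw [wR, h2τ]
  have hSx : 0 < ∑ a ∈ R, ex a := by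
    apply Finset.sum_pos _ hR
    intro a ha
    exact mul_pos (hq a ha) (Real.exp_pos _)
  have hSy : 0 < ∑ b ∈ R, ey b := by
    apply Finset.sum_pos _ hR
    intro b hb
    exact mul_pos (hq b hb) (Real.exp_pos _)
  -- numerator factorization
  have hnum : ∀ a ∈ R, ∀ b ∈ R,
      p ((a:ℂ)+(b:ℂ)*Complex.I) *
        Real.exp (-(‖((x:ℂ)+(y:ℂ)*Complex.I) - ((a:ℂ)+(b:ℂ)*Complex.I)‖)^2 / τ)
        = ex a * ey b := by
    intro a ha b hb
    rw [hp a ha b hb, habs, neg_add, add_div, Real.exp_add]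
    simp only [hex, hey]
    ring
  -- denominator factorization
  have hden : ∑ a' ∈ O, p a' *
        Real.exp (-(‖((x:ℂ)+(y:ℂ)*Complex.I) - a'‖)^2 / τ)
      = (∑ a ∈ R, ex a) * (∑ b ∈ R, ey b) := by
    rw [hO, Finset.sum_image hinj, Finset.sum_mul_sum, Finset.sum_product]
    exact Finset.sum_congr rfl fun a ha => Finset.sum_congr rfl fun b hb => hnum a ha b hb
  -- weight factorization
  have hw : ∀ a ∈ R, ∀ b ∈ R,
      wC O p ((x:ℂ)+(y:ℂ)*Complex.I) τ ((a:ℂ)+(b:ℂ)*Complex.I)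
        = wR R q x (τ/2) a * wR R q y (τ/2) b := by
    intro a ha b hb
    rw [wC, hden, hnum a ha b hb, hwx, hwy, div_mul_div_comm]
  -- weight sums
  have hwxsum : ∑ a ∈ R, wR R q x (τ/2) a = 1 := by
    simp only [hwx]
    rw [← Finset.sum_div, div_self hSx.ne']
  have hwysum : ∑ b ∈ R, wR R q y (τ/2) b = 1 := by
    simp only [hwy]
    rw [← Finset.sum_div, div_self hSy.ne']
  -- mean decomposition
  have hF : Fc O p ((x:ℂ)+(y:ℂ)*Complex.I) τ
      = (FR R q x (τ/2) : ℂ) + (FR R q y (τ/2) : ℂ) * Complex.I := by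
    rw [Fc, hO, Finset.sum_image hinj, Finset.sum_product, ← hO]
    show (∑ a ∈ R, ∑ b ∈ R,
        ((wC O p ((x:ℂ)+(y:ℂ)*Complex.I) τ ((a:ℂ)+(b:ℂ)*Complex.I) : ℝ) : ℂ)
          * ((a:ℂ)+(b:ℂ)*Complex.I)) = _
    have : ∀ a ∈ R, ∀ b ∈ R,
        ((wC O p ((x:ℂ)+(y:ℂ)*Complex.I) τ ((a:ℂ)+(b:ℂ)*Complex.I) : ℝ) : ℂ)
            * ((a:ℂ)+(b:ℂ)*Complex.I)
          = ((wR R q x (τ/2) a * a : ℝ) : ℂ) * ((wR R q y (τ/2) b : ℝ) : ℂ)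
            + ((wR R q x (τ/2) a : ℝ) : ℂ) * (((wR R q y (τ/2) b * b : ℝ) : ℂ) * Complex.I) := by
      intro a ha b hb
      rw [hw a ha b hb]
      push_cast
      ring
    rw [Finset.sum_congr rfl fun a ha =>
      Finset.sum_congr rfl fun b hb => this a ha b hb]
    simp only [Finset.sum_add_distrib]
    rw [← Finset.sum_mul_sum, ← Finset.sum_mul_sum, ← Finset.sum_mul,
        ← Complex.ofReal_sum, ← Complex.ofReal_sum, ← Complex.ofReal_sum,
        ← Complex.ofReal_sum, hwxsum, hwysum, FR, FR]
    push_cast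
    ring
  refine ⟨hw, hF, ?_⟩
  -- variance decomposition
  rw [Gc, hO, Finset.sum_image hinj, Finset.sum_product, ← hO]
  show (∑ a ∈ R, ∑ b ∈ R,
      wC O p ((x:ℂ)+(y:ℂ)*Complex.I) τ ((a:ℂ)+(b:ℂ)*Complex.I)
        * (‖((a:ℂ)+(b:ℂ)*Complex.I) - Fc O p ((x:ℂ)+(y:ℂ)*Complex.I) τ‖)^2) = _
  have habs2 : ∀ a b : ℝ,
      (‖((a:ℂ)+(b:ℂ)*Complex.I) - Fc O p ((x:ℂ)+(y:ℂ)*Complex.I) τ‖)^2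
        = (a - FR R q x (τ/2))^2 + (b - FR R q y (τ/2))^2 := by
    intro a b
    rw [hF, Complex.sq_norm, Complex.normSq_apply]
    simp
    ring
  have : ∀ a ∈ R, ∀ b ∈ R,
      wC O p ((x:ℂ)+(y:ℂ)*Complex.I) τ ((a:ℂ)+(b:ℂ)*Complex.I)
          * (‖((a:ℂ)+(b:ℂ)*Complex.I) - Fc O p ((x:ℂ)+(y:ℂ)*Complex.I) τ‖)^2
        = (wR R q x (τ/2) a * (a - FR R q x (τ/2))^2) * wR R q y (τ/2) b
          + wR R q x (τ/2) a * (wR R q y (τ/2) b * (b - FR R q y (τ/2))^2) := by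
    intro a ha b hb
    rw [hw a ha b hb, habs2]
    ring
  rw [Finset.sum_congr rfl fun a ha =>
    Finset.sum_congr rfl fun b hb => this a ha b hb]
  simp only [Finset.sum_add_distrib]
  rw [← Finset.sum_mul_sum, ← Finset.sum_mul_sum, hwxsum, hwysum, GR, GR]
  ring
end

section
/- Separable state-evolution scaling (Lemma 8): under the separable structure, for all v, g > 0 the complex MSE and variance functions reduce to their real counterparts at half the parameters: Ψ(v, g) = 2·Ψ^R(v/2, g/2) and Φ(v, g) = 2·Φ^R(v/2, g/2). -/
open MeasureTheory Filter Topology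
open scoped ENNReal NNReal

noncomputable def gaussR : Measure ℝ :=
  volume.withDensity fun z => ENNReal.ofReal ((1 / Real.sqrt (2 * Real.pi)) * Real.exp (-z ^ 2 / 2))

noncomputable def PsiR (R : Finset ℝ) (q : ℝ → ℝ) (v g : ℝ) : ℝ :=
  ∑ a ∈ R, q a * ∫ z, (FR R q (a + Real.sqrt v * z) g - a) ^ 2 ∂gaussR

noncomputable def PhiR (R : Finset ℝ) (q : ℝ → ℝ) (v g : ℝ) : ℝ :=
  ∑ a ∈ R, q a * ∫ z, GR R q (a + Real.sqrt v * z) g ∂gaussR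


section RealSide

variable {R : Finset ℝ} {q : ℝ → ℝ} (hR : R.Nonempty) (hq : ∀ a ∈ R, 0 < q a)
include hR hq

lemma S_pos_s15 (x τ : ℝ) : 0 < ∑ a' ∈ R, q a' * Real.exp (-(x - a') ^ 2 / (2 * τ)) :=
  Finset.sum_pos (fun a ha => mul_pos (hq a ha) (Real.exp_pos _)) hR

lemma wR_nonneg (x τ : ℝ) {a : ℝ} (ha : a ∈ R) : 0 ≤ wR R q x τ a :=
  div_nonneg (mul_nonneg (hq a ha).le (Real.exp_pos _).le) (S_pos_s15 hR hq x τ).le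

lemma wR_sum (x τ : ℝ) : ∑ a ∈ R, wR R q x τ a = 1 := by
  unfold wR
  rw [← Finset.sum_div, div_self (S_pos_s15 hR hq x τ).ne']

lemma wR_le_one (x τ : ℝ) {a : ℝ} (ha : a ∈ R) : wR R q x τ a ≤ 1 := by
  rw [← wR_sum hR hq x τ]
  exact Finset.single_le_sum (fun b hb => wR_nonneg hR hq x τ hb) ha

lemma FR_abs_le (x τ : ℝ) : |FR R q x τ| ≤ ∑ a ∈ R, |a| := by
  unfold FR
  calc |∑ a ∈ R, wR R q x τ a * a| ≤ ∑ a ∈ R, |wR R q x τ a * a| := Finset.abs_sum_le_sum_abs _ _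
    _ ≤ ∑ a ∈ R, |a| := by
        refine Finset.sum_le_sum fun a ha => ?_
        rw [abs_mul]
        have h1 : |wR R q x τ a| ≤ 1 := by
          rw [abs_of_nonneg (wR_nonneg hR hq x τ ha)]; exact wR_le_one hR hq x τ ha
        nlinarith [abs_nonneg a, abs_nonneg (wR R q x τ a)]

lemma GR_nonneg (x τ : ℝ) : 0 ≤ GR R q x τ :=
  Finset.sum_nonneg fun a ha => mul_nonneg (wR_nonneg hR hq x τ ha) (sq_nonneg _)

lemma GR_le (x τ : ℝ) : GR R q x τ ≤ ∑ a ∈ R, (|a| + ∑ b ∈ R, |b|) ^ 2 := by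
  unfold GR
  refine Finset.sum_le_sum fun a ha => ?_
  have h1 : |wR R q x τ a| ≤ 1 := by
    rw [abs_of_nonneg (wR_nonneg hR hq x τ ha)]; exact wR_le_one hR hq x τ ha
  have h2 : (a - FR R q x τ)^2 ≤ (|a| + ∑ b ∈ R, |b|)^2 := by
    have := FR_abs_le hR hq (R := R) (q := q) x τ
    have h3 : |a - FR R q x τ| ≤ |a| + ∑ b ∈ R, |b| := (abs_sub _ _).trans (by linarith)
    calc (a - FR R q x τ)^2 = |a - FR R q x τ|^2 := (sq_abs _).symm
      _ ≤ (|a| + ∑ b ∈ R, |b|)^2 := by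
          apply pow_le_pow_left₀ (abs_nonneg _) h3
  nlinarith [sq_nonneg (a - FR R q x τ), abs_nonneg (wR R q x τ a),
    abs_of_nonneg (wR_nonneg hR hq x τ ha)]

omit hR hq in
lemma contS (τ : ℝ) : Continuous fun x => ∑ a' ∈ R, q a' * Real.exp (-(x - a') ^ 2 / (2 * τ)) :=
  continuous_finset_sum _ fun a _ =>
    continuous_const.mul (Real.continuous_exp.comp (by fun_prop))

lemma contWR (τ a : ℝ) : Continuous fun x => wR R q x τ a := by
  unfold wR
  exact Continuous.div
    (continuous_const.mul (Real.continuous_exp.comp (by fun_prop)))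
    (contS (R:=R) (q:=q) τ) (fun x => (S_pos_s15 hR hq x τ).ne')

lemma contFR (τ : ℝ) : Continuous fun x => FR R q x τ :=
  continuous_finset_sum _ fun a _ => (contWR hR hq τ a).mul continuous_const

lemma contGR (τ : ℝ) : Continuous fun x => GR R q x τ :=
  continuous_finset_sum _ fun a _ =>
    (contWR hR hq τ a).mul (((continuous_const.sub (contFR hR hq τ)).pow 2))

end RealSide

lemma emb_inj : Function.Injective (fun ab : ℝ × ℝ => (ab.1 : ℂ) + (ab.2 : ℂ) * Complex.I) := by
  rintro ⟨a, b⟩ ⟨c, d⟩ h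
  have h1 := congrArg Complex.re h; have h2 := congrArg Complex.im h
  simp at h1 h2
  simp [h1, h2]

section ComplexSide
variable {R : Finset ℝ} {q : ℝ → ℝ} {O : Finset ℂ} {p : ℂ → ℝ}
  (hR : R.Nonempty) (hq : ∀ a ∈ R, 0 < q a)
  (hO : O = (R ×ˢ R).image fun ab : ℝ × ℝ => (ab.1 : ℂ) + (ab.2 : ℂ) * Complex.I)
  (hp : ∀ a ∈ R, ∀ b ∈ R, p ((a : ℂ) + (b : ℂ) * Complex.I) = q a * q b)

include hO in
lemma sum_O {M : Type*} [AddCommMonoid M] (f : ℂ → M) :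
    ∑ c ∈ O, f c = ∑ a ∈ R, ∑ b ∈ R, f ((a : ℂ) + (b : ℂ) * Complex.I) := by
  rw [hO, Finset.sum_image (fun x _ y _ h => emb_inj h), Finset.sum_product]

lemma abs_sq_sub (x y a b : ℝ) :
    (‖((x : ℂ) + (y : ℂ) * Complex.I) - ((a : ℂ) + (b : ℂ) * Complex.I)‖) ^ 2
      = (x - a) ^ 2 + (y - b) ^ 2 := by
  have h : ((x : ℂ) + (y : ℂ) * Complex.I) - ((a : ℂ) + (b : ℂ) * Complex.I)
      = ((x - a : ℝ) : ℂ) + ((y - b : ℝ) : ℂ) * Complex.I := by push_cast; ring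
  rw [h, Complex.sq_norm, Complex.normSq_add_mul_I]

include hO hp in
lemma denom_fact (x y g : ℝ) :
    ∑ c ∈ O, p c * Real.exp (-(‖((x:ℂ) + (y:ℂ)*Complex.I) - c‖) ^ 2 / g)
      = (∑ a ∈ R, q a * Real.exp (-(x - a) ^ 2 / (2 * (g/2))))
        * (∑ b ∈ R, q b * Real.exp (-(y - b) ^ 2 / (2 * (g/2)))) := by
  rw [sum_O hO, Finset.sum_mul_sum]
  refine Finset.sum_congr rfl fun a ha => Finset.sum_congr rfl fun b hb => ?_
  rw [hp a ha b hb, abs_sq_sub, neg_add, add_div, Real.exp_add]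
  have : 2 * (g/2) = g := by ring
  rw [this]; ring

include hO hp in
lemma wC_fact (x y g : ℝ) {a b : ℝ} (ha : a ∈ R) (hb : b ∈ R) :
    wC O p ((x:ℂ) + (y:ℂ)*Complex.I) g ((a:ℂ) + (b:ℂ)*Complex.I)
      = wR R q x (g/2) a * wR R q y (g/2) b := by
  rw [wC, denom_fact hO hp, hp a ha b hb, abs_sq_sub, wR, wR]
  have h2 : 2 * (g/2) = g := by ring
  rw [h2, neg_add, add_div, Real.exp_add, div_mul_div_comm]
  ring_nf

include hR hq hO hp in
lemma Fc_fact (x y g : ℝ) :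
    Fc O p ((x:ℂ) + (y:ℂ)*Complex.I) g
      = ((FR R q x (g/2) : ℝ) : ℂ) + ((FR R q y (g/2) : ℝ) : ℂ) * Complex.I := by
  have hb1 : ∑ b ∈ R, ((wR R q y (g/2) b : ℝ) : ℂ) = 1 := by
    rw [← Complex.ofReal_sum, wR_sum hR hq, Complex.ofReal_one]
  have ha1 : ∑ a ∈ R, ((wR R q x (g/2) a : ℝ) : ℂ) = 1 := by
    rw [← Complex.ofReal_sum, wR_sum hR hq, Complex.ofReal_one]
  have hbF : ∑ b ∈ R, ((wR R q y (g/2) b : ℝ) : ℂ) * (b : ℂ) = ((FR R q y (g/2) : ℝ) : ℂ) := by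
    rw [FR]; push_cast; rfl
  have haF : ∑ a ∈ R, ((wR R q x (g/2) a : ℝ) : ℂ) * (a : ℂ) = ((FR R q x (g/2) : ℝ) : ℂ) := by
    rw [FR]; push_cast; rfl
  rw [Fc, sum_O hO]
  have step : ∀ a ∈ R, ∑ b ∈ R,
      ((wC O p ((x:ℂ) + (y:ℂ)*Complex.I) g ((a:ℂ) + (b:ℂ)*Complex.I) : ℝ) : ℂ)
        * ((a:ℂ) + (b:ℂ)*Complex.I)
      = ((wR R q x (g/2) a : ℝ) : ℂ) * ((a : ℂ) + ((FR R q y (g/2) : ℝ) : ℂ) * Complex.I) := by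
    intro a ha
    have : ∀ b ∈ R,
        ((wC O p ((x:ℂ) + (y:ℂ)*Complex.I) g ((a:ℂ) + (b:ℂ)*Complex.I) : ℝ) : ℂ)
          * ((a:ℂ) + (b:ℂ)*Complex.I)
        = ((wR R q x (g/2) a : ℝ):ℂ) * (((wR R q y (g/2) b : ℝ):ℂ) * (a:ℂ)
            + (((wR R q y (g/2) b : ℝ):ℂ) * (b:ℂ)) * Complex.I) := by
      intro b hb
      rw [wC_fact hO hp x y g ha hb]; push_cast; ring
    rw [Finset.sum_congr rfl this, ← Finset.mul_sum, Finset.sum_add_distrib,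
      ← Finset.sum_mul, hb1, one_mul, ← Finset.sum_mul, hbF]
  rw [Finset.sum_congr rfl step]
  have expand : ∀ a ∈ R, ((wR R q x (g/2) a : ℝ):ℂ) * ((a : ℂ) + ((FR R q y (g/2) : ℝ):ℂ) * Complex.I)
      = ((wR R q x (g/2) a : ℝ):ℂ) * (a:ℂ)
        + ((wR R q x (g/2) a : ℝ):ℂ) * (((FR R q y (g/2) : ℝ):ℂ) * Complex.I) := fun a _ => by ring
  rw [Finset.sum_congr rfl expand, Finset.sum_add_distrib, haF, ← Finset.sum_mul, ha1, one_mul]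

include hR hq hO hp in
lemma Gc_fact (x y g : ℝ) :
    Gc O p ((x:ℂ) + (y:ℂ)*Complex.I) g = GR R q x (g/2) + GR R q y (g/2) := by
  rw [Gc, sum_O hO]
  have step : ∀ a ∈ R, ∑ b ∈ R,
      wC O p ((x:ℂ) + (y:ℂ)*Complex.I) g ((a:ℂ) + (b:ℂ)*Complex.I)
        * (‖((a:ℂ) + (b:ℂ)*Complex.I) - Fc O p ((x:ℂ) + (y:ℂ)*Complex.I) g‖) ^ 2
      = wR R q x (g/2) a * ((a - FR R q x (g/2))^2 + GR R q y (g/2)) := by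
    intro a ha
    have key : ∀ b ∈ R,
        wC O p ((x:ℂ) + (y:ℂ)*Complex.I) g ((a:ℂ) + (b:ℂ)*Complex.I)
          * (‖((a:ℂ) + (b:ℂ)*Complex.I) - Fc O p ((x:ℂ) + (y:ℂ)*Complex.I) g‖) ^ 2
        = wR R q x (g/2) a * (wR R q y (g/2) b * (a - FR R q x (g/2))^2
            + wR R q y (g/2) b * (b - FR R q y (g/2))^2) := by
      intro b hb
      rw [wC_fact hO hp x y g ha hb, Fc_fact hR hq hO hp, abs_sq_sub]
      ring
    rw [Finset.sum_congr rfl key, ← Finset.mul_sum, Finset.sum_add_distrib,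
      ← Finset.sum_mul, wR_sum hR hq, one_mul, ← GR]
  rw [Finset.sum_congr rfl step]
  have expand : ∀ a ∈ R, wR R q x (g/2) a * ((a - FR R q x (g/2))^2 + GR R q y (g/2))
      = wR R q x (g/2) a * (a - FR R q x (g/2))^2 + wR R q x (g/2) a * GR R q y (g/2) :=
    fun a _ => by ring
  rw [Finset.sum_congr rfl expand, Finset.sum_add_distrib, ← GR, ← Finset.sum_mul,
    wR_sum hR hq, one_mul]

end ComplexSide

noncomputable def phi (t : ℝ) : ℝ := (1 / Real.sqrt Real.pi) * Real.exp (-t ^ 2)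

lemma cont_phi : Continuous phi :=
  continuous_const.mul (Real.continuous_exp.comp (by fun_prop))

lemma integrable_phi : Integrable phi := by
  have h : Integrable (fun x : ℝ => Real.exp (-1 * x ^ 2)) := integrable_exp_neg_mul_sq one_pos
  have h2 := h.const_mul (1 / Real.sqrt Real.pi)
  unfold phi
  convert h2 using 2 with x
  ring_nf

lemma integral_phi : ∫ x, phi x = 1 := by
  have h := integral_gaussian 1
  simp only [div_one] at h
  unfold phi
  rw [MeasureTheory.integral_const_mul]
  have h2 : (fun x : ℝ => Real.exp (-x ^ 2)) = fun x : ℝ => Real.exp (-1 * x ^ 2) := by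
    funext x; ring_nf
  rw [h2, h, one_div, inv_mul_cancel₀ (Real.sqrt_ne_zero'.mpr Real.pi_pos)]

lemma gaussC_to_prod (f : ℂ → ℝ) :
    ∫ z, f z ∂gaussC
      = ∫ pt : ℝ × ℝ, f ((pt.1 : ℂ) + (pt.2 : ℂ) * Complex.I) * (phi pt.1 * phi pt.2) := by
  have hd : Measurable fun z : ℂ =>
      ((1 / Real.pi) * Real.exp (-(‖z‖) ^ 2)).toNNReal := by
    refine Measurable.real_toNNReal ?_
    exact (continuous_const.mul (Real.continuous_exp.comp
      ((continuous_norm.pow 2).neg))).measurable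
  have h0 : gaussC = volume.withDensity
      (fun z => (((1 / Real.pi) * Real.exp (-(‖z‖) ^ 2)).toNNReal : ℝ≥0∞)) := rfl
  rw [h0, integral_withDensity_eq_integral_smul hd]
  have h1 : ∀ z : ℂ, (((1 / Real.pi) * Real.exp (-(‖z‖) ^ 2)).toNNReal : ℝ≥0)
      • f z = ((1 / Real.pi) * Real.exp (-(‖z‖) ^ 2)) * f z := by
    intro z
    rw [NNReal.smul_def, Real.coe_toNNReal _ (by positivity), smul_eq_mul]
  simp_rw [h1]
  rw [← (Complex.volume_preserving_equiv_real_prod.symm).integral_comp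
    Complex.measurableEquivRealProd.symm.measurableEmbedding
    (fun z => (1 / Real.pi) * Real.exp (-(‖z‖) ^ 2) * f z)]
  refine integral_congr_ae (Filter.Eventually.of_forall fun pt => ?_)
  have he : Complex.measurableEquivRealProd.symm pt = (pt.1 : ℂ) + (pt.2 : ℂ) * Complex.I := by
    simp [Complex.measurableEquivRealProd, Complex.equivRealProdCLM_symm_apply]
  simp only [he]
  have habs : (‖(pt.1 : ℂ) + (pt.2 : ℂ) * Complex.I‖) ^ 2 = pt.1 ^ 2 + pt.2 ^ 2 := by
    rw [Complex.sq_norm, Complex.normSq_add_mul_I]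
  rw [habs]
  unfold phi
  rw [neg_add, Real.exp_add]
  have : Real.sqrt Real.pi * Real.sqrt Real.pi = Real.pi :=
    Real.mul_self_sqrt Real.pi_pos.le
  field_simp
  ring_nf; rw [Real.sq_sqrt Real.pi_pos.le]
lemma prod_integral (f₁ f₂ : ℝ → ℝ) (h₁ : Continuous f₁) (h₂ : Continuous f₂)
    (hb₁ : ∃ C, ∀ x, ‖f₁ x‖ ≤ C) (hb₂ : ∃ C, ∀ x, ‖f₂ x‖ ≤ C) :
    ∫ pt : ℝ × ℝ, (f₁ pt.1 + f₂ pt.2) * (phi pt.1 * phi pt.2)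
      = (∫ x, f₁ x * phi x) + ∫ y, f₂ y * phi y := by
  have hi₁ : Integrable (fun x => f₁ x * phi x) :=
    integrable_phi.bdd_mul h₁.aestronglyMeasurable (Filter.Eventually.of_forall hb₁.choose_spec)
  have hi₂ : Integrable (fun x => f₂ x * phi x) :=
    integrable_phi.bdd_mul h₂.aestronglyMeasurable (Filter.Eventually.of_forall hb₂.choose_spec)
  have hre : (fun pt : ℝ × ℝ => (f₁ pt.1 + f₂ pt.2) * (phi pt.1 * phi pt.2))
      = fun pt : ℝ × ℝ => (f₁ pt.1 * phi pt.1) * phi pt.2 + phi pt.1 * (f₂ pt.2 * phi pt.2) := by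
    funext pt; ring
  rw [hre, Measure.volume_eq_prod, integral_add (hi₁.mul_prod integrable_phi)
    (integrable_phi.mul_prod hi₂), integral_prod_mul (fun x => f₁ x * phi x) phi,
    integral_prod_mul phi (fun y => f₂ y * phi y), integral_phi, mul_one, one_mul]

lemma gaussR_scale (f : ℝ → ℝ) :
    ∫ t, f (t / Real.sqrt 2) ∂gaussR = ∫ x, f x * phi x := by
  have hd : Measurable fun t : ℝ =>
      ((1 / Real.sqrt (2 * Real.pi)) * Real.exp (-t ^ 2 / 2)).toNNReal := by
    refine Measurable.real_toNNReal ?_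
    exact (continuous_const.mul (Real.continuous_exp.comp (by fun_prop))).measurable
  have h0 : gaussR = volume.withDensity
      (fun t => (((1 / Real.sqrt (2 * Real.pi)) * Real.exp (-t ^ 2 / 2)).toNNReal : ℝ≥0∞)) := rfl
  rw [h0, integral_withDensity_eq_integral_smul hd]
  have h1 : ∀ t : ℝ, (((1 / Real.sqrt (2 * Real.pi)) * Real.exp (-t ^ 2 / 2)).toNNReal : ℝ≥0)
      • f (t / Real.sqrt 2)
      = (Real.sqrt 2)⁻¹ * ((fun u => f u * phi u) (t / Real.sqrt 2)) := by
    intro t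
    rw [NNReal.smul_def, Real.coe_toNNReal _ (by positivity)]
    simp only [phi]
    have ht : (t / Real.sqrt 2) ^ 2 = t ^ 2 / 2 := by
      rw [div_pow, Real.sq_sqrt (by norm_num : (0:ℝ) ≤ 2)]
    rw [ht]
    have hs : Real.sqrt (2 * Real.pi) = Real.sqrt 2 * Real.sqrt Real.pi :=
      Real.sqrt_mul (by norm_num) _
    rw [hs]
    have h2 : Real.sqrt 2 ≠ 0 := by positivity
    have h3 : Real.sqrt Real.pi ≠ 0 := by positivity
    field_simp
    ring_nf; field_simp
  simp_rw [h1]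
  rw [MeasureTheory.integral_const_mul, Measure.integral_comp_div (fun u => f u * phi u) (Real.sqrt 2),
    abs_of_nonneg (Real.sqrt_nonneg 2), smul_eq_mul, ← mul_assoc,
    inv_mul_cancel₀ (by positivity : Real.sqrt 2 ≠ 0), one_mul]

lemma key_int (f₁ f₂ : ℝ → ℝ) (h₁ : Continuous f₁) (h₂ : Continuous f₂)
    (hb₁ : ∃ C, ∀ x, ‖f₁ x‖ ≤ C) (hb₂ : ∃ C, ∀ x, ‖f₂ x‖ ≤ C) :
    ∫ z, (f₁ z.re + f₂ z.im) ∂gaussC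
      = (∫ t, f₁ (t / Real.sqrt 2) ∂gaussR) + ∫ t, f₂ (t / Real.sqrt 2) ∂gaussR := by
  rw [gaussC_to_prod, gaussR_scale, gaussR_scale, ← prod_integral f₁ f₂ h₁ h₂ hb₁ hb₂]
  refine integral_congr_ae (Filter.Eventually.of_forall fun pt => ?_)
  simp


-- MAIN THEOREM below
/-- Lemma 8 (separable state-evolution scaling): for a separable constellation with product
prior, `Ψ(v, g) = 2·Ψ^R(v/2, g/2)` and `Φ(v, g) = 2·Φ^R(v/2, g/2)` for all `v, g > 0`. -/
theorem lama_separable_state_evolution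
    (R : Finset ℝ) (hR : R.Nonempty) (q : ℝ → ℝ)
    (hq : ∀ a ∈ R, 0 < q a) (hqsum : ∑ a ∈ R, q a = 1)
    (O : Finset ℂ)
    (hO : O = (R ×ˢ R).image fun ab : ℝ × ℝ => (ab.1 : ℂ) + (ab.2 : ℂ) * Complex.I)
    (p : ℂ → ℝ)
    (hp : ∀ a ∈ R, ∀ b ∈ R, p ((a : ℂ) + (b : ℂ) * Complex.I) = q a * q b) :
    ∀ v g : ℝ, 0 < v → 0 < g →
      PsiC O p v g = 2 * PsiR R q (v / 2) (g / 2) ∧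
      PhiC O p v g = 2 * PhiR R q (v / 2) (g / 2) := by
  intro v g hv hg
  set B : ℝ := ∑ c ∈ R, |c| with hB
  have hshift : ∀ (a b : ℝ) (z : ℂ), ((a:ℂ) + (b:ℂ)*Complex.I) + ((Real.sqrt v : ℝ):ℂ)*z
      = ((a + Real.sqrt v * z.re : ℝ):ℂ) + ((b + Real.sqrt v * z.im : ℝ):ℂ)*Complex.I := by
    intro a b z
    apply Complex.ext <;> simp
  have hsc : ∀ t : ℝ, Real.sqrt v * (t / Real.sqrt 2) = Real.sqrt (v/2) * t := by
    intro t
    rw [Real.sqrt_div hv.le 2]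
    ring
  have hcont : ∀ a : ℝ, Continuous fun t : ℝ => FR R q (a + Real.sqrt v * t) (g/2) :=
    fun a => (contFR hR hq (g/2)).comp (by fun_prop)
  have hcontG : ∀ a : ℝ, Continuous fun t : ℝ => GR R q (a + Real.sqrt v * t) (g/2) :=
    fun a => (contGR hR hq (g/2)).comp (by fun_prop)
  have hbnd : ∀ a t : ℝ, ‖(FR R q (a + Real.sqrt v * t) (g/2) - a)^2‖ ≤ (B + |a|)^2 := by
    intro a t
    have hF := FR_abs_le hR hq (R := R) (q := q) (a + Real.sqrt v * t) (g/2)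
    rw [Real.norm_eq_abs, abs_of_nonneg (sq_nonneg _)]
    nlinarith [le_abs_self (FR R q (a + Real.sqrt v * t) (g/2)),
      neg_abs_le (FR R q (a + Real.sqrt v * t) (g/2)), le_abs_self a, neg_abs_le a,
      abs_nonneg a, abs_nonneg (FR R q (a + Real.sqrt v * t) (g/2))]
  have hbndG : ∀ a t : ℝ, ‖GR R q (a + Real.sqrt v * t) (g/2)‖ ≤ ∑ c ∈ R, (|c| + B)^2 := by
    intro a t
    rw [Real.norm_eq_abs, abs_of_nonneg (GR_nonneg hR hq _ _)]
    exact GR_le hR hq _ _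
  -- inner integral identities
  have hΨinner : ∀ a ∈ R, ∀ b ∈ R,
      (∫ z, (‖Fc O p ((((a:ℂ)+(b:ℂ)*Complex.I)) + ((Real.sqrt v : ℝ):ℂ)*z) g
          - ((a:ℂ)+(b:ℂ)*Complex.I)‖)^2 ∂gaussC)
      = (∫ t, (FR R q (a + Real.sqrt (v/2)*t) (g/2) - a)^2 ∂gaussR)
        + ∫ t, (FR R q (b + Real.sqrt (v/2)*t) (g/2) - b)^2 ∂gaussR := by
    intro a ha b hb
    have step1 : (∫ z, (‖Fc O p ((((a:ℂ)+(b:ℂ)*Complex.I))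
          + ((Real.sqrt v : ℝ):ℂ)*z) g - ((a:ℂ)+(b:ℂ)*Complex.I)‖)^2 ∂gaussC)
        = ∫ z, ((fun t => (FR R q (a + Real.sqrt v * t) (g/2) - a)^2) z.re
            + (fun t => (FR R q (b + Real.sqrt v * t) (g/2) - b)^2) z.im) ∂gaussC := by
      refine integral_congr_ae (Filter.Eventually.of_forall fun z => ?_)
      simp only [hshift a b z, Fc_fact hR hq hO hp]
      have hd : ((FR R q (a + Real.sqrt v * z.re) (g/2) : ℝ):ℂ)
            + ((FR R q (b + Real.sqrt v * z.im) (g/2) : ℝ):ℂ) * Complex.I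
            - ((a:ℂ)+(b:ℂ)*Complex.I)
          = ((FR R q (a + Real.sqrt v * z.re) (g/2) - a : ℝ):ℂ)
            + ((FR R q (b + Real.sqrt v * z.im) (g/2) - b : ℝ):ℂ) * Complex.I := by
        push_cast; ring
      rw [hd]
      have := abs_sq_sub (FR R q (a + Real.sqrt v * z.re) (g/2) - a)
        (FR R q (b + Real.sqrt v * z.im) (g/2) - b) 0 0
      simp only [Complex.ofReal_zero, zero_mul, add_zero, sub_zero] at this
      simpa using this
    rw [step1, key_int (fun t => (FR R q (a + Real.sqrt v * t) (g/2) - a)^2)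
      (fun t => (FR R q (b + Real.sqrt v * t) (g/2) - b)^2) (((hcont a).sub continuous_const).pow 2) (((hcont b).sub continuous_const).pow 2)
      ⟨(B + |a|)^2, hbnd a⟩ ⟨(B + |b|)^2, hbnd b⟩]
    congr 1
    · refine integral_congr_ae (Filter.Eventually.of_forall fun t => ?_)
      simp only [hsc]
    · refine integral_congr_ae (Filter.Eventually.of_forall fun t => ?_)
      simp only [hsc]
  have hΦinner : ∀ a ∈ R, ∀ b ∈ R,
      (∫ z, Gc O p ((((a:ℂ)+(b:ℂ)*Complex.I)) + ((Real.sqrt v : ℝ):ℂ)*z) g ∂gaussC)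
      = (∫ t, GR R q (a + Real.sqrt (v/2)*t) (g/2) ∂gaussR)
        + ∫ t, GR R q (b + Real.sqrt (v/2)*t) (g/2) ∂gaussR := by
    intro a ha b hb
    have step1 : (∫ z, Gc O p ((((a:ℂ)+(b:ℂ)*Complex.I)) + ((Real.sqrt v : ℝ):ℂ)*z) g ∂gaussC)
        = ∫ z, ((fun t => GR R q (a + Real.sqrt v * t) (g/2)) z.re
            + (fun t => GR R q (b + Real.sqrt v * t) (g/2)) z.im) ∂gaussC := by
      refine integral_congr_ae (Filter.Eventually.of_forall fun z => ?_)
      simp only [hshift a b z, Gc_fact hR hq hO hp]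
    rw [step1, key_int _ _ (hcontG a) (hcontG b)
      ⟨∑ c ∈ R, (|c| + B)^2, hbndG a⟩ ⟨∑ c ∈ R, (|c| + B)^2, hbndG b⟩]
    congr 1
    · refine integral_congr_ae (Filter.Eventually.of_forall fun t => ?_)
      simp only [hsc]
    · refine integral_congr_ae (Filter.Eventually.of_forall fun t => ?_)
      simp only [hsc]
  -- summation
  constructor
  · rw [PsiC, sum_O hO (f := fun c => p c * ∫ z,
      (‖Fc O p (c + ((Real.sqrt v : ℝ):ℂ)*z) g - c‖)^2 ∂gaussC)]
    have step : ∀ a ∈ R, (∑ b ∈ R, p ((a:ℂ)+(b:ℂ)*Complex.I) * ∫ z,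
        (‖Fc O p ((((a:ℂ)+(b:ℂ)*Complex.I)) + ((Real.sqrt v : ℝ):ℂ)*z) g
          - ((a:ℂ)+(b:ℂ)*Complex.I)‖)^2 ∂gaussC)
        = q a * (∫ t, (FR R q (a + Real.sqrt (v/2)*t) (g/2) - a)^2 ∂gaussR)
          + q a * ∑ b ∈ R, q b * ∫ t, (FR R q (b + Real.sqrt (v/2)*t) (g/2) - b)^2 ∂gaussR := by
      intro a ha
      have inner : ∀ b ∈ R, p ((a:ℂ)+(b:ℂ)*Complex.I) * (∫ z,
          (‖Fc O p ((((a:ℂ)+(b:ℂ)*Complex.I)) + ((Real.sqrt v : ℝ):ℂ)*z) g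
            - ((a:ℂ)+(b:ℂ)*Complex.I)‖)^2 ∂gaussC)
          = (q a * (∫ t, (FR R q (a + Real.sqrt (v/2)*t) (g/2) - a)^2 ∂gaussR)) * q b
            + q a * (q b * ∫ t, (FR R q (b + Real.sqrt (v/2)*t) (g/2) - b)^2 ∂gaussR) := by
        intro b hb
        rw [hp a ha b hb, hΨinner a ha b hb]
        ring
      rw [Finset.sum_congr rfl inner, Finset.sum_add_distrib, ← Finset.mul_sum, hqsum, mul_one,
        ← Finset.mul_sum]
    rw [Finset.sum_congr rfl step, Finset.sum_add_distrib, ← Finset.sum_mul, hqsum, one_mul,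
      PsiR]
    ring
  · rw [PhiC, sum_O hO (f := fun c => p c * ∫ z,
      Gc O p (c + ((Real.sqrt v : ℝ):ℂ)*z) g ∂gaussC)]
    have step : ∀ a ∈ R, (∑ b ∈ R, p ((a:ℂ)+(b:ℂ)*Complex.I) * ∫ z,
        Gc O p ((((a:ℂ)+(b:ℂ)*Complex.I)) + ((Real.sqrt v : ℝ):ℂ)*z) g ∂gaussC)
        = q a * (∫ t, GR R q (a + Real.sqrt (v/2)*t) (g/2) ∂gaussR)
          + q a * ∑ b ∈ R, q b * ∫ t, GR R q (b + Real.sqrt (v/2)*t) (g/2) ∂gaussR := by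
      intro a ha
      have inner : ∀ b ∈ R, p ((a:ℂ)+(b:ℂ)*Complex.I) * (∫ z,
          Gc O p ((((a:ℂ)+(b:ℂ)*Complex.I)) + ((Real.sqrt v : ℝ):ℂ)*z) g ∂gaussC)
          = (q a * (∫ t, GR R q (a + Real.sqrt (v/2)*t) (g/2) ∂gaussR)) * q b
            + q a * (q b * ∫ t, GR R q (b + Real.sqrt (v/2)*t) (g/2) ∂gaussR) := by
        intro b hb
        rw [hp a ha b hb, hΦinner a ha b hb]
        ring
      rw [Finset.sum_congr rfl inner, Finset.sum_add_distrib, ← Finset.mul_sum, hqsum, mul_one,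
        ← Finset.mul_sum]
    rw [Finset.sum_congr rfl step, Finset.sum_add_distrib, ← Finset.sum_mul, hqsum, one_mul,
      PhiR]
    ring
end

section
/- BPSK state-evolution simplification (the identity reducing the BPSK MSE function to Tanaka's fixed-point form, equations (34)–(35) of the paper): for every σ > 0, ∫_ℝ tanh((1+σz)/σ²)² dν(z) = ∫_ℝ tanh((1+σz)/σ²) dν(z), where ν is the standard real Gaussian measure; consequently, for the real constellation R = {−1, +1} with uniform prior, the matched MSE function satisfies Ψ^R(σ², σ²) = ∫_ℝ (1 − tanh((1+σz)/σ²)) dν(z). -/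
open MeasureTheory Filter Topology
open scoped ENNReal NNReal

/-- Gaussian density. -/
noncomputable def gPdf (z : ℝ) : ℝ := (1 / Real.sqrt (2 * Real.pi)) * Real.exp (-z ^ 2 / 2)

lemma gPdf_nonneg (z : ℝ) : 0 ≤ gPdf z := by
  unfold gPdf; positivity

lemma gaussR_eq : gaussR = ProbabilityTheory.gaussianReal 0 1 := by
  rw [gaussR, ProbabilityTheory.gaussianReal_of_var_ne_zero 0 one_ne_zero]
  congr 1
  funext x
  unfold ProbabilityTheory.gaussianPDF ProbabilityTheory.gaussianPDFReal
  norm_num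

instance : IsProbabilityMeasure gaussR := by
  rw [gaussR_eq]; infer_instance

/-- Reduce a `gaussR` integral to a Lebesgue integral. -/
lemma integral_gaussR (f : ℝ → ℝ) :
    (∫ z, f z ∂gaussR) = ∫ z, gPdf z * f z := by
  have h : gaussR = volume.withDensity (fun z => ((Real.toNNReal (gPdf z) : ℝ≥0) : ℝ≥0∞)) := by
    rw [gaussR]; rfl
  rw [h, integral_withDensity_eq_integral_smul (by unfold gPdf; fun_prop) f]
  congr 1; funext z
  simp [NNReal.smul_def, Real.coe_toNNReal _ (gPdf_nonneg z)]

lemma abs_tanh_le_one (x : ℝ) : |Real.tanh x| ≤ 1 := by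
  rw [Real.tanh_eq_sinh_div_cosh, abs_div, abs_of_pos (Real.cosh_pos x),
    div_le_one (Real.cosh_pos x), Real.abs_sinh, ← Real.cosh_abs]
  exact (Real.sinh_lt_cosh _).le

lemma continuous_tanh : Continuous Real.tanh := by
  have h : Real.tanh = fun x => Real.sinh x / Real.cosh x := funext Real.tanh_eq_sinh_div_cosh
  rw [h]
  exact Real.continuous_sinh.div Real.continuous_cosh fun x => (Real.cosh_pos x).ne'

lemma integrable_bounded (f : ℝ → ℝ) (hf : Continuous f) (C : ℝ) (h : ∀ x, |f x| ≤ C) :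
    Integrable f gaussR := by
  exact (integrable_const C).mono' hf.aestronglyMeasurable (Filter.Eventually.of_forall h)

lemma key_exp (u : ℝ) : Real.exp (-(2 * u)) * (1 + Real.tanh u) = 1 - Real.tanh u := by
  rw [Real.tanh_eq_sinh_div_cosh, Real.sinh_eq, Real.cosh_eq]
  have h1 : (0:ℝ) < Real.exp u + Real.exp (-u) := by positivity
  have h4 : Real.exp (-(2 * u)) * Real.exp u = Real.exp (-u) := by
    rw [← Real.exp_add]; ring_nf
  field_simp
  linarith [h4]

/-- The Nishimori-type identity: part 1. -/
lemma part1 (σ : ℝ) (hσ : 0 < σ) :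
    (∫ z, Real.tanh ((1 + σ * z) / σ ^ 2) ^ 2 ∂gaussR) =
      (∫ z, Real.tanh ((1 + σ * z) / σ ^ 2) ∂gaussR) := by
  set u : ℝ → ℝ := fun z => (1 + σ * z) / σ ^ 2 with hu
  set g : ℝ → ℝ := fun z => gPdf z * (Real.tanh (u z) ^ 2 - Real.tanh (u z)) with hg
  have hσ2 : (σ : ℝ) ^ 2 ≠ 0 := by positivity
  have hσ0 : σ ≠ 0 := ne_of_gt hσ
  have key : ∀ z, g (-z - 2 / σ) = -g z := by
    intro z
    have hu' : u (-z - 2 / σ) = -(u z) := by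
      simp only [hu]
      field_simp
      ring
    have hφ : gPdf (-z - 2 / σ) = gPdf z * Real.exp (-(2 * u z)) := by
      unfold gPdf
      rw [mul_assoc, ← Real.exp_add]
      congr 2
      simp only [hu]
      field_simp
      ring
    simp only [hg, hu', hφ, Real.tanh_neg]
    linear_combination (gPdf z * Real.tanh (u z)) * key_exp (u z)
  have step1 : (∫ z, g z) = ∫ z, g (-z - 2 / σ) := by
    calc (∫ z, g z) = ∫ z, g (-z) := (integral_neg_eq_self g volume).symm
      _ = ∫ z, g (-(z + 2 / σ)) :=
          (integral_add_right_eq_self (fun z => g (-z)) (2 / σ)).symm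
      _ = ∫ z, g (-z - 2 / σ) := by congr 1; funext z; congr 1; ring
  have step2 : (∫ z, g z) = -∫ z, g z := by
    conv_lhs => rw [step1]
    simp_rw [key]
    exact integral_neg g
  have hg0 : (∫ z, g z) = 0 := by linarith
  have hint1 : Integrable (fun z => Real.tanh (u z)) gaussR := by
    apply integrable_bounded _ (continuous_tanh.comp (by fun_prop)) 1
    intro x; exact abs_tanh_le_one _
  have hint2 : Integrable (fun z => Real.tanh (u z) ^ 2) gaussR := by
    apply integrable_bounded _ ((continuous_tanh.comp (by fun_prop)).pow 2) 1
    intro x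
    show |Real.tanh (u x) ^ 2| ≤ 1
    rw [abs_pow]
    calc |Real.tanh (u x)| ^ 2 ≤ 1 ^ 2 := by
          apply pow_le_pow_left₀ (abs_nonneg _) (abs_tanh_le_one _)
      _ = 1 := one_pow 2
  have expand : (∫ z, Real.tanh (u z) ^ 2 ∂gaussR) - (∫ z, Real.tanh (u z) ∂gaussR)
      = ∫ z, g z := by
    rw [← integral_sub hint2 hint1,
      integral_gaussR (fun z => Real.tanh (u z) ^ 2 - Real.tanh (u z))]
  linarith [expand.trans hg0]

lemma gaussR_neg (f : ℝ → ℝ) : (∫ z, f (-z) ∂gaussR) = ∫ z, f z ∂gaussR := by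
  rw [integral_gaussR, integral_gaussR]
  have : ∀ z : ℝ, gPdf z * f (-z) = (fun y => gPdf y * f y) (-z) := by
    intro z; simp only [gPdf]; ring_nf
  simp_rw [this]
  exact integral_neg_eq_self (fun y => gPdf y * f y) volume

lemma FR_pair (q : ℝ → ℝ) (h1 : q (-1) = 1 / 2) (h2 : q 1 = 1 / 2)
    (τ : ℝ) (hτ : 0 < τ) (x : ℝ) :
    FR ({-1, 1} : Finset ℝ) q x τ = Real.tanh (x / τ) := by
  have hne : (-1 : ℝ) ≠ 1 := by norm_num
  have hτ0 : τ ≠ 0 := ne_of_gt hτ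
  unfold FR wR
  rw [Finset.sum_pair hne, Finset.sum_pair hne, h1, h2]
  have hA : Real.exp (-(x - 1) ^ 2 / (2 * τ))
      = Real.exp (-(x ^ 2 + 1) / (2 * τ)) * Real.exp (x / τ) := by
    rw [← Real.exp_add]; congr 1; field_simp; ring
  have hB : Real.exp (-(x - -1) ^ 2 / (2 * τ))
      = Real.exp (-(x ^ 2 + 1) / (2 * τ)) * Real.exp (-(x / τ)) := by
    rw [← Real.exp_add]; congr 1; field_simp; ring
  rw [hA, hB, Real.tanh_eq_sinh_div_cosh, Real.sinh_eq, Real.cosh_eq]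
  have hC : (0:ℝ) < Real.exp (-(x ^ 2 + 1) / (2 * τ)) := Real.exp_pos _
  have hE : (0:ℝ) < Real.exp (x / τ) := Real.exp_pos _
  have hF : (0:ℝ) < Real.exp (-(x / τ)) := Real.exp_pos _
  field_simp
  ring

/-- BPSK state-evolution simplification (equations (34)–(35) of the paper): for every
`σ > 0`, the Gaussian average of `tanh((1+σz)/σ²)²` equals that of `tanh((1+σz)/σ²)`;
consequently, for BPSK with uniform prior the matched MSE function satisfies
`Ψ^R(σ², σ²) = ∫ (1 − tanh((1+σz)/σ²)) dν(z)`. -/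
theorem lama_bpsk_state_evolution
    (R : Finset ℝ) (hR : R = ({-1, 1} : Finset ℝ))
    (q : ℝ → ℝ) (hq : ∀ a ∈ R, q a = 1 / 2) :
    ∀ σ : ℝ, 0 < σ →
      (∫ z, Real.tanh ((1 + σ * z) / σ ^ 2) ^ 2 ∂gaussR) =
        (∫ z, Real.tanh ((1 + σ * z) / σ ^ 2) ∂gaussR) ∧
      PsiR R q (σ ^ 2) (σ ^ 2) =
        ∫ z, (1 - Real.tanh ((1 + σ * z) / σ ^ 2)) ∂gaussR := by
  intro σ hσ
  have h1 := part1 σ hσ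
  refine ⟨h1, ?_⟩
  subst hR
  have hqm : q (-1) = 1 / 2 := hq (-1) (by simp)
  have hqp : q 1 = 1 / 2 := hq 1 (by simp)
  have hσ2 : (0:ℝ) < σ ^ 2 := by positivity
  have hsq : Real.sqrt (σ ^ 2) = σ := Real.sqrt_sq hσ.le
  have hne : (-1 : ℝ) ≠ 1 := by norm_num
  unfold PsiR
  rw [Finset.sum_pair hne, hqm, hqp, hsq]
  -- rewrite FR to tanh inside the integrals
  have hFR : ∀ a z : ℝ, FR ({-1, 1} : Finset ℝ) q (a + σ * z) (σ ^ 2)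
      = Real.tanh ((a + σ * z) / σ ^ 2) := fun a z => FR_pair q hqm hqp _ hσ2 _
  simp_rw [hFR]
  -- the a = -1 integral equals the a = 1 integral via z ↦ -z
  have hneg : (∫ z, (Real.tanh ((-1 + σ * z) / σ ^ 2) - -1) ^ 2 ∂gaussR)
      = ∫ z, (1 - Real.tanh ((1 + σ * z) / σ ^ 2)) ^ 2 ∂gaussR := by
    rw [← gaussR_neg (fun z => (Real.tanh ((-1 + σ * z) / σ ^ 2) - -1) ^ 2)]
    congr 1
    funext z
    have : (-1 + σ * -z) / σ ^ 2 = -((1 + σ * z) / σ ^ 2) := by ring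
    rw [this, Real.tanh_neg]
    ring
  have hpos : (∫ z, (Real.tanh ((1 + σ * z) / σ ^ 2) - 1) ^ 2 ∂gaussR)
      = ∫ z, (1 - Real.tanh ((1 + σ * z) / σ ^ 2)) ^ 2 ∂gaussR := by
    congr 1; funext z; ring
  rw [hneg, hpos]
  -- now : 1/2 I + 1/2 I = ∫ (1 - t)
  have collapse : (∫ z, (1 - Real.tanh ((1 + σ * z) / σ ^ 2)) ^ 2 ∂gaussR)
      = ∫ z, (1 - Real.tanh ((1 + σ * z) / σ ^ 2)) ∂gaussR := by
    set t : ℝ → ℝ := fun z => Real.tanh ((1 + σ * z) / σ ^ 2) with ht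
    have hint1 : Integrable t gaussR := by
      apply integrable_bounded _ (continuous_tanh.comp (by fun_prop)) 1
      intro x; exact abs_tanh_le_one _
    have hint2 : Integrable (fun z => t z ^ 2) gaussR := by
      apply integrable_bounded _ ((continuous_tanh.comp (by fun_prop)).pow 2) 1
      intro x
      show |t x ^ 2| ≤ 1
      rw [abs_pow]
      calc |t x| ^ 2 ≤ 1 ^ 2 := by
            apply pow_le_pow_left₀ (abs_nonneg _) (abs_tanh_le_one _)
        _ = 1 := one_pow 2
    have e1 : (∫ z, (1 - t z) ^ 2 ∂gaussR)
        = (∫ z, (1 : ℝ) ∂gaussR) - 2 * (∫ z, t z ∂gaussR) + (∫ z, t z ^ 2 ∂gaussR) := by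
      have hfe : (fun z => (1 - t z) ^ 2) = fun z => ((1 : ℝ) - 2 * t z) + t z ^ 2 := by
        funext z; ring
      have i1 : Integrable (fun z => (1 : ℝ) - 2 * t z) gaussR := by
        exact (integrable_const 1).sub (hint1.const_mul 2)
      rw [hfe, integral_add i1 hint2,
        integral_sub (integrable_const 1) (hint1.const_mul 2), integral_const_mul]
    have e2 : (∫ z, (1 - t z) ∂gaussR)
        = (∫ z, (1 : ℝ) ∂gaussR) - (∫ z, t z ∂gaussR) :=
      integral_sub (integrable_const 1) hint1
    rw [e1, e2, h1]
    ring
  rw [collapse]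
  ring
end
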